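/- arXiv:2510.12937 — 4 statements merged into one kernel-verified Lean document; each statement's English description precedes it below -/
import Mathlib

section
/- Let P ⊂ ℝ^d be a polytope and let B = (v₁,…,v_d) be a P-admissible frame. Suppose B' = (v₁',…,v_d') is obtained from B by a positive lower triangular transformation, i.e., v_q' = λ_q v_q + Σ_{p>q} λ_{pq} v_p with all λ_q > 0. Then B' is also P-admissible and induces the same f-orientation on P as B (i.e., B and B' are P-equivalent). -/
noncomputable section
open scoped Classical

/-- The ambient space `ℝ^d`. -/
abbrev Amb (d : ℕ) := Fin d → ℝ

variable {d : ℕ}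

/-- The linear span of a subset of `ℝ^d`: the span of differences of its points. -/
def linSpan (F : Set (Amb d)) : Submodule ℝ (Amb d) :=
  Submodule.span ℝ {w | ∃ x ∈ F, ∃ y ∈ F, w = x - y}

/-- The dimension of a subset of `ℝ^d` (dimension of its affine span). -/
def fdim (F : Set (Amb d)) : ℕ := Module.finrank ℝ (linSpan F)

/-- `F` is a face of `P`: the maximal locus of a linear functional on `P`. -/
def IsFaceOf (P F : Set (Amb d)) : Prop :=
  ∃ φ : Amb d →ₗ[ℝ] ℝ, F = {x ∈ P | ∀ y ∈ P, φ y ≤ φ x}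

/-- `η` is a normal covector for the face `E` of `Q`: its maximal locus on `Q` is `E`. -/
def NormalOf (Q E : Set (Amb d)) (η : Amb d →ₗ[ℝ] ℝ) : Prop :=
  E = {x ∈ Q | ∀ y ∈ Q, η y ≤ η x}

/-- The `k`-th projection associated to a frame `B`: sends `B i` to `B i` for `i < k`
and to `0` for `i ≥ k`. -/
def proj (B : Module.Basis (Fin d) ℝ (Amb d)) (k : ℕ) : Amb d →ₗ[ℝ] Amb d :=
  B.constr ℝ (fun i => if (i : ℕ) < k then B i else 0)

/-- The `(k+1)`-st frame vector `v_{k+1}` (0-indexed: `B k`). -/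
def fvec (B : Module.Basis (Fin d) ℝ (Amb d)) (k : ℕ) : Amb d :=
  if h : k < d then B ⟨k, h⟩ else 0

/-- A frame `B` is `P`-admissible if for every (nonempty) `k`-face `F` of `P`, the
projection `π_k` restricts to a linear isomorphism on `Lin F` (equivalently, is
injective on `Lin F`, the dimensions being equal). -/
def Admissible (P : Set (Amb d)) (B : Module.Basis (Fin d) ℝ (Amb d)) : Prop :=
  ∀ F : Set (Amb d), IsFaceOf P F → F.Nonempty →
    ∀ w ∈ linSpan F, proj B (fdim F) w = 0 → w = 0

/-- `w : Fin k → ℝ^d` represents the induced orientation of the face `F`: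
each `w i = σ_k^F (v_{i+1})`, i.e. `w i ∈ Lin F` and `π_k (w i) = v_{i+1}`.
The induced orientation `β_F` is then (the class of) `w 0 ∧ ⋯ ∧ w (k-1)`. -/
def OriRep (B : Module.Basis (Fin d) ℝ (Amb d)) (F : Set (Amb d)) (k : ℕ)
    (w : Fin k → Amb d) : Prop :=
  ∀ i : Fin k, w i ∈ linSpan F ∧ proj B k (w i) = fvec B (i : ℕ)

/-- Two frames are `P`-equivalent if they induce the same `f`-orientation on every
(nonempty) face of `P`: any representatives of the induced orientations are positive
multiples of each other in the exterior algebra. -/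
def FrameEquiv (P : Set (Amb d)) (B B' : Module.Basis (Fin d) ℝ (Amb d)) : Prop :=
  ∀ F : Set (Amb d), IsFaceOf P F → F.Nonempty →
    ∀ w w' : Fin (fdim F) → Amb d, OriRep B F (fdim F) w → OriRep B' F (fdim F) w' →
      ∃ l : ℝ, 0 < l ∧
        ExteriorAlgebra.ιMulti ℝ (fdim F) w = l • ExteriorAlgebra.ιMulti ℝ (fdim F) w'

/-- `G` belongs to the `k`-target of the face `F`: `G` is a `k`-face of `F` whose
projection `π_{k+1}(G)` is a facet of `π_{k+1}(F)` with a normal covector evaluating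
positively on `v_{k+1}`. -/
def InKTarget (B : Module.Basis (Fin d) ℝ (Amb d)) (k : ℕ) (F G : Set (Amb d)) : Prop :=
  IsFaceOf F G ∧ G.Nonempty ∧ fdim G = k ∧
  ∃ η : Amb d →ₗ[ℝ] ℝ,
    NormalOf (proj B (k+1) '' F) (proj B (k+1) '' G) η ∧ 0 < η (fvec B k)

/-- `G` belongs to the `k`-source of the face `F`. -/
def InKSource (B : Module.Basis (Fin d) ℝ (Amb d)) (k : ℕ) (F G : Set (Amb d)) : Prop :=
  IsFaceOf F G ∧ G.Nonempty ∧ fdim G = k ∧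
  ∃ η : Amb d →ₗ[ℝ] ℝ,
    NormalOf (proj B (k+1) '' F) (proj B (k+1) '' G) η ∧ η (fvec B k) < 0

/-- `E` belongs to the target `t(F)` of the face `F` (the `(dim F - 1)`-target). -/
def InTarget (B : Module.Basis (Fin d) ℝ (Amb d)) (F E : Set (Amb d)) : Prop :=
  InKTarget B (fdim F - 1) F E

/-- `E` belongs to the source `s(F)` of the face `F`. -/
def InSource (B : Module.Basis (Fin d) ℝ (Amb d)) (F E : Set (Amb d)) : Prop :=
  InKSource B (fdim F - 1) F E

/-- A cellular `k`-string in the framed polytope `(P,B)`: a sequence of faces of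
dimension `> k` such that consecutive faces are glued along a common face in the
`k`-target of the first and the `k`-source of the second. -/
def IsCellString (B : Module.Basis (Fin d) ℝ (Amb d)) (P : Set (Amb d)) (k : ℕ) {m : ℕ}
    (Fs : Fin m → Set (Amb d)) : Prop :=
  (∀ i, IsFaceOf P (Fs i) ∧ k < fdim (Fs i)) ∧
  ∀ i : ℕ, ∀ h : i + 1 < m,
    ∃ G, InKTarget B k (Fs ⟨i, by omega⟩) G ∧ InKSource B k (Fs ⟨i+1, h⟩) G

/-!
Since `T = B.toMatrix B'` is lower triangular, `π_k` kills `v'_q` for `q ≥ k`, so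
`π_k ∘ π'_k = π_k`; in particular `π'_k w = 0` forces `π_k w = 0`, which transfers admissibility.
On a `k`-face the representatives of the two orientations are then related by
`σ'(v'_j) = ∑_{i < k} T i j • σ(v_i)`, so their wedge products differ by the determinant of the
leading `k × k` block of `T`, the product of its positive diagonal entries.
-/

namespace AlternatingMap

variable {R M N ι : Type*} [CommRing R] [AddCommGroup M] [Module R M] [AddCommGroup N]
  [Module R N] [Fintype ι] [DecidableEq ι]

theorem eq_smulRight_basis_det (e : Module.Basis ι R M) (f : M [⋀^ι]→ₗ[R] N) :
    f = e.det.smulRight (f e) := by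
  refine Module.Basis.ext_alternating e fun i h => ?_
  let σ : Equiv.Perm ι := Equiv.ofBijective i (Finite.injective_iff_bijective.1 h)
  change f (e ∘ σ) = e.det.smulRight (f e) (e ∘ σ)
  simp [AlternatingMap.map_perm, Module.Basis.det_self]

theorem map_sum_smul_eq_det_smul (f : M [⋀^ι]→ₗ[R] N) (v : ι → M) (A : Matrix ι ι R) :
    f (fun j => ∑ i, A i j • v i) = A.det • f v := by
  have key := congrArg (fun g => g (fun j i => A i j))
    (eq_smulRight_basis_det (Pi.basisFun R ι) (f.compLinearMap (Fintype.linearCombination R v)))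
  have hdet : Matrix.detRowAlternating (fun j i => A i j) = A.det := Matrix.det_transpose A
  simpa [Fintype.linearCombination_apply, Pi.basisFun_det, hdet] using key

end AlternatingMap

section LowerTriangularFrame

variable {d : ℕ}

theorem proj_basis (B : Module.Basis (Fin d) ℝ (Amb d)) (k : ℕ) (j : Fin d) :
    proj B k (B j) = if (j : ℕ) < k then B j else 0 :=
  B.constr_basis ℝ _ j

theorem proj_apply (B : Module.Basis (Fin d) ℝ (Amb d)) {k : ℕ} (hk : k ≤ d) (x : Amb d) :
    proj B k x = ∑ i : Fin k, B.repr x (Fin.castLE hk i) • B (Fin.castLE hk i) := by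
  conv_lhs => rw [← B.sum_repr x]
  rw [map_sum]
  simp only [map_smul, proj_basis, smul_ite, smul_zero]
  symm
  refine Fintype.sum_of_injective (Fin.castLE hk) (Fin.castLE_injective hk) _ _ ?_ ?_
  · intro p hp
    rw [if_neg fun hpk => hp ⟨⟨p, hpk⟩, rfl⟩]
  · intro i
    rw [if_pos (by simp)]

theorem fvec_castLE (B : Module.Basis (Fin d) ℝ (Amb d)) {k : ℕ} (hk : k ≤ d) (i : Fin k) :
    fvec B i = B (Fin.castLE hk i) :=
  dif_pos (i.2.trans_le hk)

theorem fdim_le (F : Set (Amb d)) : fdim F ≤ d := by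
  simpa [fdim] using Submodule.finrank_le (linSpan F)

variable {B B' : Module.Basis (Fin d) ℝ (Amb d)}

theorem proj_apply_eq_zero_of_le (hT : (B.toMatrix B').IsLowerTriangular) {k : ℕ} {q : Fin d}
    (hq : k ≤ q) : proj B k (B' q) = 0 := by
  rw [← B.sum_repr (B' q), map_sum]
  refine Finset.sum_eq_zero fun p _ => ?_
  rcases lt_or_ge p q with hpq | hqp
  · rw [← B.toMatrix_apply, hT hpq, zero_smul, map_zero]
  · rw [map_smul, proj_basis, if_neg (by omega), smul_zero]

theorem proj_comp_proj (hT : (B.toMatrix B').IsLowerTriangular) (k : ℕ) :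
    proj B k ∘ₗ proj B' k = proj B k := by
  refine B'.ext fun q => ?_
  rw [LinearMap.comp_apply, proj_basis]
  split_ifs with hq
  · rfl
  · rw [map_zero, proj_apply_eq_zero_of_le hT (not_lt.1 hq)]

theorem Admissible.of_isLowerTriangular {P : Set (Amb d)} (hB : Admissible P B)
    (hT : (B.toMatrix B').IsLowerTriangular) : Admissible P B' := by
  intro F hF hne w hw hw0
  refine hB F hF hne w hw ?_
  rw [← proj_comp_proj hT, LinearMap.comp_apply, hw0, map_zero]

theorem OriRep.eq_sum_toMatrix_smul {F : Set (Amb d)} {k : ℕ} (hk : k ≤ d)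
    (hinj : ∀ w ∈ linSpan F, proj B k w = 0 → w = 0) (hT : (B.toMatrix B').IsLowerTriangular)
    {w w' : Fin k → Amb d} (hw : OriRep B F k w) (hw' : OriRep B' F k w') (j : Fin k) :
    w' j = ∑ i, B.toMatrix B' (Fin.castLE hk i) (Fin.castLE hk j) • w i := by
  have hproj : proj B k (w' j) = proj B k (B' (Fin.castLE hk j)) := by
    rw [← fvec_castLE B' hk, ← (hw' j).2, ← LinearMap.comp_apply, proj_comp_proj hT]
  have hmem : w' j - ∑ i, B.toMatrix B' (Fin.castLE hk i) (Fin.castLE hk j) • w i ∈ linSpan F :=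
    sub_mem (hw' j).1 (sum_mem fun i _ => Submodule.smul_mem _ _ (hw i).1)
  refine sub_eq_zero.1 (hinj _ hmem ?_)
  rw [map_sub, hproj, proj_apply B hk, map_sum, sub_eq_zero]
  refine Finset.sum_congr rfl fun i _ => ?_
  rw [map_smul, (hw i).2, fvec_castLE B hk, B.toMatrix_apply]

theorem Matrix.IsLowerTriangular.det_submatrix_castLE_pos {R : Type*} [CommRing R]
    [PartialOrder R] [IsStrictOrderedRing R] {M : Matrix (Fin d) (Fin d) R}
    (hM : M.IsLowerTriangular) (hdiag : ∀ i, 0 < M i i) {k : ℕ} (hk : k ≤ d) :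
    0 < (M.submatrix (Fin.castLE hk) (Fin.castLE hk)).det := by
  have hsub : (M.submatrix (Fin.castLE hk) (Fin.castLE hk)).IsLowerTriangular :=
    fun i j hij => hM ((Fin.castLE_lt_castLE_iff hk).2 hij)
  rw [Matrix.det_of_isLowerTriangular _ hsub]
  exact Finset.prod_pos fun i _ => hdiag _

theorem FrameEquiv.of_isLowerTriangular {P : Set (Amb d)} (hB : Admissible P B)
    (hT : (B.toMatrix B').IsLowerTriangular) (hdiag : ∀ q, 0 < B.toMatrix B' q q) :
    FrameEquiv P B B' := by
  intro F hF hne w w' hw hw'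
  set A := (B.toMatrix B').submatrix (Fin.castLE (fdim_le F)) (Fin.castLE (fdim_le F))
  have hA : 0 < A.det := hT.det_submatrix_castLE_pos hdiag (fdim_le F)
  have hw'A : w' = fun j => ∑ i, A i j • w i :=
    funext (OriRep.eq_sum_toMatrix_smul (fdim_le F) (hB F hF hne) hT hw hw')
  refine ⟨A.det⁻¹, inv_pos.2 hA, ?_⟩
  rw [hw'A, AlternatingMap.map_sum_smul_eq_det_smul, smul_smul, inv_mul_cancel₀ hA.ne', one_smul]

end LowerTriangularFrame

theorem Module.Basis.toMatrix_apply_of_eq_smul_add_sum {d : ℕ}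
    {B B' : Module.Basis (Fin d) ℝ (Amb d)} {lam : Fin d → ℝ} {c : Fin d → Fin d → ℝ}
    (hB' : ∀ q, B' q = lam q • B q + ∑ p ∈ Finset.univ.filter (fun p => q < p), c p q • B p)
    (p q : Fin d) :
    B.toMatrix B' p q = (if q = p then lam q else 0) + if q < p then c p q else 0 := by
  simp [Module.Basis.toMatrix_apply, hB', Finsupp.single_apply]

theorem stmt3_general (d : ℕ) (P : Set (Amb d))
    (B B' : Module.Basis (Fin d) ℝ (Amb d)) (hB : Admissible P B)
    (lam : Fin d → ℝ) (hlam : ∀ q, 0 < lam q) (c : Fin d → Fin d → ℝ)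
    (hB' : ∀ q, B' q = lam q • B q + ∑ p ∈ Finset.univ.filter (fun p => q < p), c p q • B p) :
    Admissible P B' ∧ FrameEquiv P B B' := by
  have hT : (B.toMatrix B').IsLowerTriangular := fun p q (hpq : p < q) => by
    rw [B.toMatrix_apply_of_eq_smul_add_sum hB', if_neg hpq.ne', if_neg hpq.not_gt, add_zero]
  have hdiag : ∀ q, 0 < B.toMatrix B' q q := fun q => by
    simpa [B.toMatrix_apply_of_eq_smul_add_sum hB'] using hlam q
  exact ⟨hB.of_isLowerTriangular hT, FrameEquiv.of_isLowerTriangular hB hT hdiag⟩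

theorem stmt3 (d : ℕ) (S : Finset (Amb d)) (P : Set (Amb d))
    (hP : P = convexHull ℝ (S : Set (Amb d)))
    (B B' : Module.Basis (Fin d) ℝ (Amb d)) (hB : Admissible P B)
    (lam : Fin d → ℝ) (hlam : ∀ q, 0 < lam q) (c : Fin d → Fin d → ℝ)
    (hB' : ∀ q, B' q = lam q • B q + ∑ p ∈ Finset.univ.filter (fun p => q < p), c p q • B p) :
    Admissible P B' ∧ FrameEquiv P B B' :=
  stmt3_general d P B B' hB lam hlam c hB'

end
end

section
/- A positive f-orientation on a polytope P is uniquely determined by the partitions of the facets of each face into sources and targets. That is, if β and γ are two f-orientations of P that assign the positive orientation to every vertex and determine the same source/target partition on the boundary of every face, then β_F ∼ γ_F for every face F of P. -/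
noncomputable section
open scoped Classical

variable {d : ℕ}

/-- `b` represents the orientation of the face `F`: a nonzero wedge of `dim F`
vectors parallel to `F`, viewed in the exterior algebra of `ℝ^d`. -/
def IsOriEA (F : Set (Amb d)) (b : ExteriorAlgebra ℝ (Amb d)) : Prop :=
  b ≠ 0 ∧ ∃ w : Fin (fdim F) → Amb d, (∀ i, w i ∈ linSpan F) ∧
    b = ExteriorAlgebra.ιMulti ℝ (fdim F) w

/-- `β` is an `f`-orientation of `P`: it assigns to every nonempty face a
representative of an orientation of its linear span, vertices being positively
oriented. -/
def IsFOri (P : Set (Amb d)) (β : Set (Amb d) → ExteriorAlgebra ℝ (Amb d)) : Prop :=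
  (∀ F, IsFaceOf P F → F.Nonempty → IsOriEA F (β F)) ∧
  (∀ F, IsFaceOf P F → F.Nonempty → fdim F = 0 →
    ∃ c : ℝ, 0 < c ∧ β F = algebraMap ℝ (ExteriorAlgebra ℝ (Amb d)) c)

/-- `v` is outer-pointing for the face `E` of `F`. -/
def OuterPointing (F E : Set (Amb d)) (v : Amb d) : Prop :=
  ∃ η : Amb d →ₗ[ℝ] ℝ, NormalOf F E η ∧ 0 < η v

/-- `v` is inner-pointing for the face `E` of `F`. -/
def InnerPointing (F E : Set (Amb d)) (v : Amb d) : Prop :=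
  ∃ η : Amb d →ₗ[ℝ] ℝ, NormalOf F E η ∧ η v < 0

/-- `E` is a facet of `F`. -/
def IsFacetOf (F E : Set (Amb d)) : Prop :=
  IsFaceOf F E ∧ E.Nonempty ∧ fdim E + 1 = fdim F

/-- `E` is a target facet of `F` for the `f`-orientation `β`:
`β_F ∼ β_E ∧ v` for some outer-pointing `v`. -/
def InOriTarget (β : Set (Amb d) → ExteriorAlgebra ℝ (Amb d)) (F E : Set (Amb d)) : Prop :=
  IsFacetOf F E ∧ ∃ v ∈ linSpan F, OuterPointing F E v ∧
    ∃ l : ℝ, 0 < l ∧ β E * ExteriorAlgebra.ι ℝ v = l • β F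

/-- `E` is a source facet of `F` for the `f`-orientation `β`. -/
def InOriSource (β : Set (Amb d) → ExteriorAlgebra ℝ (Amb d)) (F E : Set (Amb d)) : Prop :=
  IsFacetOf F E ∧ ∃ v ∈ linSpan F, InnerPointing F E v ∧
    ∃ l : ℝ, 0 < l ∧ β E * ExteriorAlgebra.ι ℝ v = l • β F


/-!
Induction on the dimension of a face `F`. Vertices carry positive scalars in both orientations.
If `dim F = n + 1`, pick a facet `E` of `F` (one exists, and it is again a face of `P`; both facts
come from tilting normal functionals) and a vector `z ∈ Lin F` pointing into `F` from `E`. Since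
`β_E ∧ z` is a nonzero top form on `Lin F`, it equals `μ β_F` with `μ ≠ 0`, and `E` is a target
facet exactly when `μ < 0`, a source facet exactly when `μ > 0`. As `E` is on the same side for
`γ` and `β_E ∼ γ_E` by induction, the coefficients for `β` and `γ` have the same sign, so
`β_F ∼ γ_F`.
-/

section LinearAlgebra

variable {K M : Type*} [Field K] [AddCommGroup M] [Module K M] [FiniteDimensional K M]

theorem Submodule.exists_mem_ker_notMem {V W : Submodule K M}
    (hdim : Module.finrank K V + 2 ≤ Module.finrank K W) (η : M →ₗ[K] K) :
    ∃ u ∈ W, η u = 0 ∧ u ∉ V := by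
  have hker : Module.finrank K M ≤ Module.finrank K (LinearMap.ker η) + 1 := by
    have := LinearMap.finrank_range_add_finrank_ker η
    have := (LinearMap.range η).finrank_le
    rw [Module.finrank_self] at this
    omega
  have hsup := Submodule.finrank_sup_add_finrank_inf_eq (LinearMap.ker η) W
  have := (LinearMap.ker η ⊔ W).finrank_le
  obtain ⟨u, ⟨hηu, huW⟩, huV⟩ := SetLike.not_le_iff_exists.1 fun h : LinearMap.ker η ⊓ W ≤ V =>
    by have := Submodule.finrank_mono h; omega
  exact ⟨u, huW, hηu, huV⟩

theorem Submodule.sup_span_singleton_eq_of_finrank_eq_succ {V W : Submodule K M} (hVW : V ≤ W)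
    (hdim : Module.finrank K W = Module.finrank K V + 1) {z : M} (hzW : z ∈ W) (hzV : z ∉ V) :
    V ⊔ K ∙ z = W := by
  refine Submodule.eq_of_le_of_finrank_le
    (sup_le hVW ((Submodule.span_singleton_le_iff_mem _ _).2 hzW)) ?_
  have hlt : V < V ⊔ K ∙ z := lt_of_le_of_ne le_sup_left fun h =>
    hzV (h ▸ Submodule.mem_sup_right (Submodule.mem_span_singleton_self z))
  have := Submodule.finrank_lt_finrank_of_lt hlt
  omega

end LinearAlgebra

namespace ExteriorAlgebra

variable {K M : Type*} [Field K] [AddCommGroup M] [Module K M]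

theorem ιMulti_snoc {n : ℕ} (w : Fin n → M) (x : M) :
    ιMulti K (n + 1) (Fin.snoc w x) = ιMulti K n w * ι K x := by
  rw [ιMulti_apply, ιMulti_apply, List.ofFn_succ']
  simp only [Fin.snoc_castSucc, Fin.snoc_last, List.concat_eq_append, List.prod_append,
    List.prod_cons, List.prod_nil, mul_one]

theorem ιMulti_ne_zero_iff {n : ℕ} {v : Fin n → M} :
    ιMulti K n v ≠ 0 ↔ LinearIndependent K v := by
  refine ⟨fun h => by_contra fun hv => h ((ιMulti K n).map_linearDependent v hv), fun hv => ?_⟩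
  have h := (exteriorPower.ιMulti_family_linearIndependent_field (n := n) hv).ne_zero
    (Set.powersetCard.ofFinEmbEquiv (OrderIso.refl (Fin n)).toOrderEmbedding)
  simp only [exteriorPower.ιMulti_family, Equiv.symm_apply_apply] at h
  exact fun h0 => h (Subtype.ext h0)

variable [FiniteDimensional K M]

theorem ιMulti_mul_ι_eq_zero {V : Submodule K M} {k : ℕ} (hk : Module.finrank K V = k)
    {w : Fin k → M} (hw : ∀ i, w i ∈ V) {e : M} (he : e ∈ V) :
    ιMulti K k w * ι K e = 0 := by
  rw [← ιMulti_snoc, ← not_ne_iff, ιMulti_ne_zero_iff]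
  intro hind
  have hle : Submodule.span K (Set.range (Fin.snoc w e : Fin (k + 1) → M)) ≤ V := by
    rw [Submodule.span_le, Set.range_subset_iff]
    exact Fin.lastCases (by simpa using he) (by simpa using hw)
  have := Submodule.finrank_mono hle
  rw [finrank_span_eq_card hind, Fintype.card_fin] at this
  omega

theorem exists_ιMulti_eq_smul {V : Submodule K M} {k : ℕ} (hk : Module.finrank K V = k)
    {w w' : Fin k → M} (hw : ∀ i, w i ∈ V) (hw' : ∀ i, w' i ∈ V)
    (h0 : ιMulti K k w' ≠ 0) : ∃ c : K, ιMulti K k w = c • ιMulti K k w' := by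
  have hmap : ∀ u : Fin k → V, ιMulti K k (fun i => (u i : M))
      = (exteriorPower.map k V.subtype (exteriorPower.ιMulti K k u) : ExteriorAlgebra K M) := by
    intro u
    rw [exteriorPower.map_apply_ιMulti]
    rfl
  have hone : Module.finrank K (⋀[K]^k V) = 1 := by
    rw [exteriorPower.finrank_eq, hk, Nat.choose_self]
  have hx : exteriorPower.ιMulti K k (fun i => (⟨w' i, hw' i⟩ : V)) ≠ 0 := fun h =>
    h0 (by simpa [h] using hmap fun i => ⟨w' i, hw' i⟩)
  obtain ⟨c, hc⟩ := exists_smul_eq_of_finrank_eq_one hone hx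
    (exteriorPower.ιMulti K k fun i => (⟨w i, hw i⟩ : V))
  refine ⟨c, ?_⟩
  have := hmap fun i => ⟨w i, hw i⟩
  rw [← hc, map_smul] at this
  simpa [hmap fun i => ⟨w' i, hw' i⟩] using this

theorem smul_ιMulti_mul_ι_eq {V W : Submodule K M} (hVW : V ≤ W)
    (hdim : Module.finrank K W = Module.finrank K V + 1) {k : ℕ}
    (hk : Module.finrank K V = k) {w : Fin k → M} (hw : ∀ i, w i ∈ V)
    {η : M →ₗ[K] K} (hη : ∀ x ∈ V, η x = 0) {z v : M} (hz : z ∈ W) (hv : v ∈ W) :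
    η z • (ιMulti K k w * ι K v) = η v • (ιMulti K k w * ι K z) := by
  by_cases hzV : z ∈ V
  · rw [hη z hzV, ιMulti_mul_ι_eq_zero hk hw hzV, zero_smul, smul_zero]
  rw [← Submodule.sup_span_singleton_eq_of_finrank_eq_succ hVW hdim hz hzV] at hv
  obtain ⟨e, he, y, hy, rfl⟩ := Submodule.mem_sup.1 hv
  obtain ⟨a, rfl⟩ := Submodule.mem_span_singleton.1 hy
  rw [map_add, map_smul, mul_add, ιMulti_mul_ι_eq_zero hk hw he, zero_add, map_add, hη e he,
    map_smul, mul_smul_comm, smul_smul, zero_add, smul_eq_mul, mul_comm]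

end ExteriorAlgebra

theorem exists_pos_smul_of_mul_eq_smul {A : Type*} [Semiring A] [Algebra ℝ A]
    {a a' b b' x : A} {c μ ν : ℝ} (hc : 0 < c) (ha : a = c • a') (hμν : 0 < μ * ν)
    (hax : a * x = μ • b) (hax' : a' * x = ν • b') : ∃ l : ℝ, 0 < l ∧ b = l • b' := by
  have hμ : μ ≠ 0 := left_ne_zero_of_mul hμν.ne'
  refine ⟨c * (ν / μ), mul_pos hc (div_pos_iff.2 (mul_pos_iff.1 (mul_comm μ ν ▸ hμν))), ?_⟩
  rw [← inv_smul_smul₀ hμ b, ← hax, ha, smul_mul_assoc, hax', smul_smul, smul_smul]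
  congr 1
  field_simp

open Filter Topology in
theorem Finset.exists_pos_add_mul_le_and_eq_iff {ι : Type*} (S : Finset ι) {f g : ι → ℝ}
    {M M' : ℝ} (hf : ∀ s ∈ S, f s ≤ M) (hg : ∀ s ∈ S, f s = M → g s ≤ M') :
    ∃ ε > 0, ∀ s ∈ S, f s + ε * g s ≤ M + ε * M' ∧
      (f s + ε * g s = M + ε * M' ↔ f s = M ∧ g s = M') := by
  have hsmall : ∀ᶠ ε in 𝓝[>] (0 : ℝ), ∀ s ∈ S, f s < M → ε * (g s - M') < M - f s := by
    refine (Filter.eventually_all_finset S).2 fun s _ => ?_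
    have hlim : Tendsto (fun ε : ℝ => ε * (g s - M')) (𝓝[>] 0) (𝓝 0) := by
      refine (Continuous.tendsto' (f := fun ε : ℝ => ε * (g s - M')) ?_ 0 0 (zero_mul _)).mono_left
        nhdsWithin_le_nhds
      fun_prop
    by_cases hs : f s < M
    · exact (hlim.eventually (gt_mem_nhds (sub_pos.2 hs))).mono fun _ h _ => h
    · exact Eventually.of_forall fun _ h => absurd h hs
  obtain ⟨ε, hε, hεpos⟩ := (hsmall.and self_mem_nhdsWithin).exists
  refine ⟨ε, hεpos, fun s hs => ?_⟩
  rcases (hf s hs).lt_or_eq with hlt | heq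
  · have := hε s hs hlt
    exact ⟨by linarith, fun h => by linarith, fun h => absurd h.1 hlt.ne⟩
  · have hgs := hg s hs heq
    refine ⟨by nlinarith, fun h => ⟨heq, ?_⟩, fun h => by rw [h.1, h.2]⟩
    rw [heq] at h
    exact mul_left_cancel₀ hεpos.ne' (add_left_cancel h)

theorem Finset.exists_pos_add_mul_le_and_exists_eq {ι : Type*} (T : Finset ι) {f g : ι → ℝ}
    {M c : ℝ} (hf : ∀ s ∈ T, f s ≤ M) (hg : ∀ s ∈ T, f s = M → g s = c)
    (hA : ∃ s ∈ T, c < g s) :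
    ∃ t > 0, (∀ s ∈ T, f s + t * g s ≤ M + t * c) ∧
      ∃ s₁ ∈ T, c < g s₁ ∧ f s₁ + t * g s₁ = M + t * c := by
  have hA' : (T.filter (c < g ·)).Nonempty :=
    let ⟨s, hs, h⟩ := hA; ⟨s, Finset.mem_filter.2 ⟨hs, h⟩⟩
  obtain ⟨s₁, hs₁, hmin⟩ :=
    (T.filter (c < g ·)).exists_min_image (fun s => (M - f s) / (g s - c)) hA'
  have hgap : ∀ s ∈ T, c < g s → f s < M := fun s hs hcs =>
    (hf s hs).lt_of_ne fun h => (hg s hs h ▸ hcs).false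
  obtain ⟨hs₁T, hcs₁⟩ := Finset.mem_filter.1 hs₁
  have ht : 0 < (M - f s₁) / (g s₁ - c) :=
    div_pos (by linarith [hgap s₁ hs₁T hcs₁]) (by linarith)
  refine ⟨_, ht, fun s hs => ?_, s₁, hs₁T, hcs₁, ?_⟩
  · by_cases hcs : c < g s
    · have := (le_div_iff₀ (by linarith)).1 (hmin s (Finset.mem_filter.2 ⟨hs, hcs⟩))
      linarith
    · nlinarith [hf s hs]
  · field_simp [(sub_pos.2 hcs₁).ne']
    ring

section ConvexHull

variable {E : Type*} [AddCommGroup E] [Module ℝ E]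

def exposedFace (P : Set E) (η : E →ₗ[ℝ] ℝ) : Set E :=
  {x ∈ P | ∀ y ∈ P, η y ≤ η x}

theorem exposedFace_subset (P : Set E) (η : E →ₗ[ℝ] ℝ) : exposedFace P η ⊆ P :=
  fun _ hx => hx.1

theorem map_eq_of_mem_exposedFace {P : Set E} {η : E →ₗ[ℝ] ℝ} {x y : E}
    (hx : x ∈ exposedFace P η) (hy : y ∈ exposedFace P η) : η x = η y :=
  le_antisymm (hy.2 x hx.1) (hx.2 y hy.1)

theorem map_le_of_mem_convexHull {T : Set E} {φ : E →ₗ[ℝ] ℝ} {M : ℝ} (hM : ∀ s ∈ T, φ s ≤ M)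
    {x : E} (hx : x ∈ convexHull ℝ T) : φ x ≤ M :=
  convexHull_min hM (convex_halfSpace_le φ.isLinear M) hx

theorem mem_convexHull_filter_of_map_eq {T : Finset E} {φ : E →ₗ[ℝ] ℝ} {M : ℝ}
    (hM : ∀ s ∈ T, φ s ≤ M) {x : E} (hx : x ∈ convexHull ℝ (T : Set E)) (hφx : φ x = M) :
    x ∈ convexHull ℝ (T.filter (φ · = M) : Set E) := by
  rw [Finset.mem_convexHull'] at hx ⊢
  obtain ⟨w, hw0, hw1, rfl⟩ := hx
  -- `M - φ x` is a nonnegative combination of the gaps `M - φ s`, so every weighted gap vanishes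
  have hgap : ∑ s ∈ T, w s * (M - φ s) = 0 := by
    simp only [mul_sub, Finset.sum_sub_distrib, ← Finset.sum_mul, hw1, ← hφx, map_sum, map_smul,
      smul_eq_mul]
    ring
  have hsupp : ∀ s ∈ T, w s ≠ 0 → φ s = M := fun s hs hws => by
    have := (Finset.sum_eq_zero_iff_of_nonneg fun s hs =>
      mul_nonneg (hw0 s hs) (sub_nonneg.2 (hM s hs))).1 hgap s hs
    linarith [(mul_eq_zero.1 this).resolve_left hws]
  refine ⟨w, fun s hs => hw0 s (Finset.mem_filter.1 hs).1, ?_, ?_⟩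
  · rw [Finset.sum_filter_of_ne fun s hs h => hsupp s hs h, hw1]
  · exact Finset.sum_filter_of_ne fun s hs h => hsupp s hs (left_ne_zero_of_smul h)

theorem exposedFace_convexHull {T : Finset E} {φ : E →ₗ[ℝ] ℝ} {M : ℝ} (hM : ∀ s ∈ T, φ s ≤ M)
    (hMmem : ∃ s ∈ T, φ s = M) :
    exposedFace (convexHull ℝ (T : Set E)) φ = convexHull ℝ (T.filter (φ · = M) : Set E) := by
  obtain ⟨s₀, hs₀, rfl⟩ := hMmem
  have hfilter : (T.filter (φ · = φ s₀) : Set E) ⊆ T :=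
    Finset.coe_subset.2 (Finset.filter_subset _ _)
  refine Set.Subset.antisymm (fun x ⟨hx, hxmax⟩ => ?_) fun x hx => ?_
  · refine mem_convexHull_filter_of_map_eq hM hx (le_antisymm (map_le_of_mem_convexHull hM hx) ?_)
    exact hxmax s₀ (subset_convexHull ℝ _ hs₀)
  · have hφx : φ x = φ s₀ :=
      convexHull_min (fun s hs => (Finset.mem_filter.1 hs).2) (convex_hyperplane φ.isLinear _) hx
    exact ⟨convexHull_mono hfilter hx, fun y hy => hφx ▸ map_le_of_mem_convexHull hM hy⟩

theorem exposedFace_convexHull_sup' {T : Finset E} (hT : T.Nonempty) (φ : E →ₗ[ℝ] ℝ) :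
    exposedFace (convexHull ℝ (T : Set E)) φ
      = convexHull ℝ (T.filter (φ · = T.sup' hT φ) : Set E) :=
  exposedFace_convexHull (fun _ hs => T.le_sup' φ hs)
    (let ⟨s, hs, h⟩ := T.exists_mem_eq_sup' hT φ; ⟨s, hs, h.symm⟩)

theorem exposedFace_convexHull_nonempty {T : Finset E} (hT : T.Nonempty) (φ : E →ₗ[ℝ] ℝ) :
    (exposedFace (convexHull ℝ (T : Set E)) φ).Nonempty := by
  obtain ⟨s, hs, hmax⟩ := T.exists_max_image φ hT
  exact ⟨s, subset_convexHull ℝ _ hs, fun y hy => map_le_of_mem_convexHull hmax hy⟩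

end ConvexHull

section Faces

variable {d : ℕ}

theorem sub_mem_linSpan {F : Set (Amb d)} {x y : Amb d} (hx : x ∈ F) (hy : y ∈ F) :
    x - y ∈ linSpan F :=
  Submodule.subset_span ⟨x, hx, y, hy, rfl⟩

theorem linSpan_mono {F G : Set (Amb d)} (h : F ⊆ G) : linSpan F ≤ linSpan G :=
  Submodule.span_mono fun _ ⟨x, hx, y, hy, hw⟩ => ⟨x, h hx, y, h hy, hw⟩

theorem map_eq_zero_of_mem_linSpan {F : Set (Amb d)} {ψ : Amb d →ₗ[ℝ] ℝ}
    (h : ∀ x ∈ F, ∀ y ∈ F, ψ x = ψ y) {w : Amb d} (hw : w ∈ linSpan F) : ψ w = 0 := by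
  refine (Submodule.span_le (p := LinearMap.ker ψ)).2 ?_ hw
  rintro _ ⟨x, hx, y, hy, rfl⟩
  simp [h x hx y hy]

theorem map_eq_zero_of_mem_linSpan_exposedFace {P : Set (Amb d)} {η : Amb d →ₗ[ℝ] ℝ}
    {w : Amb d} (hw : w ∈ linSpan (exposedFace P η)) : η w = 0 :=
  map_eq_zero_of_mem_linSpan (fun _ hx _ hy => map_eq_of_mem_exposedFace hx hy) hw

theorem map_sub_neg_of_notMem_exposedFace {P : Set (Amb d)} {η : Amb d →ₗ[ℝ] ℝ} {x y : Amb d}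
    (hx : x ∈ P) (hxE : x ∉ exposedFace P η) (hy : y ∈ exposedFace P η) : η (x - y) < 0 := by
  have hlt : η x < η y :=
    (hy.2 x hx).lt_of_ne fun h => hxE ⟨hx, fun z hz => h ▸ hy.2 z hz⟩
  rw [map_sub]
  linarith

theorem fdim_exposedFace_lt {P : Set (Amb d)} {η : Amb d →ₗ[ℝ] ℝ}
    (h : ∃ u ∈ linSpan P, η u ≠ 0) : fdim (exposedFace P η) < fdim P := by
  obtain ⟨u, hu, hηu⟩ := h
  refine Submodule.finrank_lt_finrank_of_lt
    (lt_of_le_of_ne (linSpan_mono (exposedFace_subset P η)) fun heq => hηu ?_)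
  exact map_eq_zero_of_mem_linSpan_exposedFace (heq ▸ hu)

theorem IsFaceOf.subset {P F : Set (Amb d)} (h : IsFaceOf P F) : F ⊆ P :=
  let ⟨φ, hφ⟩ := h; hφ ▸ exposedFace_subset P φ

theorem NormalOf.map_eq_zero {F E : Set (Amb d)} {η : Amb d →ₗ[ℝ] ℝ} (h : NormalOf F E η)
    {w : Amb d} (hw : w ∈ linSpan E) : η w = 0 := by
  subst h
  exact map_eq_zero_of_mem_linSpan_exposedFace hw

theorem IsFaceOf.trans_convexHull {S : Finset (Amb d)} {F E : Set (Amb d)}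
    (hF : IsFaceOf (convexHull ℝ (S : Set (Amb d))) F) (hE : IsFaceOf F E) (hEne : E.Nonempty) :
    IsFaceOf (convexHull ℝ (S : Set (Amb d))) E := by
  obtain ⟨φ, rfl⟩ := hF
  obtain ⟨ψ, rfl⟩ := hE
  have hS : S.Nonempty :=
    let ⟨x, hx⟩ := hEne; Finset.coe_nonempty.1 (convexHull_nonempty_iff.1 ⟨x, hx.1.1⟩)
  set T := S.filter (φ · = S.sup' hS φ)
  have hT : T.Nonempty :=
    let ⟨s, hs, h⟩ := S.exists_mem_eq_sup' hS φ; ⟨s, Finset.mem_filter.2 ⟨hs, h.symm⟩⟩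
  obtain ⟨ε, hεpos, hε⟩ := S.exists_pos_add_mul_le_and_eq_iff (f := φ) (g := ψ)
    (M' := T.sup' hT ψ) (fun s hs => S.le_sup' φ hs)
    fun s hs h => T.le_sup' ψ (Finset.mem_filter.2 ⟨hs, h⟩)
  refine ⟨φ + ε • ψ, ?_⟩
  change exposedFace (exposedFace _ φ) ψ = exposedFace _ (φ + ε • ψ)
  obtain ⟨t, ht, htmax⟩ := T.exists_mem_eq_sup' hT ψ
  have htS : t ∈ S := (Finset.mem_filter.1 ht).1
  rw [exposedFace_convexHull_sup' hS, exposedFace_convexHull_sup' hT,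
    exposedFace_convexHull (M := S.sup' hS φ + ε * T.sup' hT ψ) (fun s hs => (hε s hs).1)
      ⟨t, htS, (hε t htS).2.2 ⟨(Finset.mem_filter.1 ht).2, htmax.symm⟩⟩, Finset.filter_filter]
  congr 2
  ext s
  simp only [Finset.mem_filter, LinearMap.add_apply, LinearMap.smul_apply, smul_eq_mul, T]
  exact ⟨fun ⟨hs, h⟩ => ⟨hs, (hε s hs).2.2 h⟩, fun ⟨hs, h⟩ => ⟨hs, (hε s hs).2.1 h⟩⟩

/- Tilt `η` to `η + t ψ` until the face picks up a vertex `s₁` on which `ψ` is larger; since `ψ`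
is constant on the old face, the old face survives. -/
theorem exists_fdim_exposedFace_lt_of_exists_lt {T : Finset (Amb d)} {η ψ : Amb d →ₗ[ℝ] ℝ}
    {u₀ y₀ : Amb d} (hu₀ : u₀ ∈ linSpan (convexHull ℝ (T : Set (Amb d)))) (hηu₀ : η u₀ = 0)
    (hψu₀ : ψ u₀ ≠ 0)
    (hψ : linSpan (exposedFace (convexHull ℝ (T : Set (Amb d))) η) ≤ LinearMap.ker ψ)
    (hy₀ : y₀ ∈ exposedFace (convexHull ℝ (T : Set (Amb d))) η) (hA : ∃ s ∈ T, ψ y₀ < ψ s) :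
    ∃ χ : Amb d →ₗ[ℝ] ℝ, (∃ u ∈ linSpan (convexHull ℝ (T : Set (Amb d))), χ u ≠ 0) ∧
      fdim (exposedFace (convexHull ℝ (T : Set (Amb d))) η)
        < fdim (exposedFace (convexHull ℝ (T : Set (Amb d))) χ) := by
  set Q := convexHull ℝ (T : Set (Amb d))
  have hψG : ∀ x ∈ exposedFace Q η, ψ x = ψ y₀ := fun x hx => by
    simpa [sub_eq_zero] using hψ (sub_mem_linSpan hx hy₀)
  have hTG : ∀ s ∈ T, η s = η y₀ → s ∈ exposedFace Q η := fun s hs h =>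
    ⟨subset_convexHull ℝ _ hs, fun y hy => h ▸ hy₀.2 y hy⟩
  obtain ⟨t, ht, hle, s₁, hs₁, hψs₁, hχs₁⟩ :=
    T.exists_pos_add_mul_le_and_exists_eq (f := η) (g := ψ)
      (fun s hs => hy₀.2 s (subset_convexHull ℝ _ hs)) (fun s hs h => hψG s (hTG s hs h)) hA
  have hχQ : ∀ y ∈ Q, (η + t • ψ) y ≤ η y₀ + t * ψ y₀ :=
    fun y hy => map_le_of_mem_convexHull (φ := η + t • ψ) hle hy
  have hGsub : exposedFace Q η ⊆ exposedFace Q (η + t • ψ) := fun x hx =>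
    ⟨hx.1, fun y hy => by simpa [map_eq_of_mem_exposedFace hx hy₀, hψG x hx] using hχQ y hy⟩
  have hs₁G : s₁ ∈ exposedFace Q (η + t • ψ) :=
    ⟨subset_convexHull ℝ _ hs₁, fun y hy => by simpa [hχs₁] using hχQ y hy⟩
  refine ⟨η + t • ψ, ⟨u₀, hu₀, by simp [hηu₀, ht.ne', hψu₀]⟩,
    Submodule.finrank_lt_finrank_of_lt (lt_of_le_of_ne (linSpan_mono hGsub) fun heq => ?_)⟩
  have := hψ (heq ▸ sub_mem_linSpan hs₁G (hGsub hy₀))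
  simp only [LinearMap.mem_ker, map_sub, sub_eq_zero] at this
  exact hψs₁.ne' this

theorem exists_fdim_exposedFace_lt {T : Finset (Amb d)} {η : Amb d →ₗ[ℝ] ℝ} (hT : T.Nonempty)
    (hdim : fdim (exposedFace (convexHull ℝ (T : Set (Amb d))) η) + 2
      ≤ fdim (convexHull ℝ (T : Set (Amb d)))) :
    ∃ χ : Amb d →ₗ[ℝ] ℝ, (∃ u ∈ linSpan (convexHull ℝ (T : Set (Amb d))), χ u ≠ 0) ∧
      fdim (exposedFace (convexHull ℝ (T : Set (Amb d))) η)
        < fdim (exposedFace (convexHull ℝ (T : Set (Amb d))) χ) := by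
  obtain ⟨u₀, hu₀, hηu₀, hu₀G⟩ := Submodule.exists_mem_ker_notMem hdim η
  obtain ⟨ψ, hψu₀, hψ⟩ := Submodule.exists_le_ker_of_notMem hu₀G
  obtain ⟨y₀, hy₀⟩ := exposedFace_convexHull_nonempty hT η
  obtain ⟨s, hs, hψs⟩ : ∃ s ∈ T, ψ s ≠ ψ y₀ := by
    by_contra! h
    have hQ : ∀ x ∈ convexHull ℝ (T : Set (Amb d)), ψ x = ψ y₀ := fun x hx =>
      convexHull_min h (convex_hyperplane ψ.isLinear _) hx
    exact hψu₀ (map_eq_zero_of_mem_linSpan (fun x hx y hy => by rw [hQ x hx, hQ y hy]) hu₀)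
  rcases hψs.lt_or_gt with hlt | hgt
  · exact exists_fdim_exposedFace_lt_of_exists_lt (ψ := -ψ) hu₀ hηu₀ (by simpa using hψu₀)
      (fun x hx => by simpa using hψ hx) hy₀ ⟨s, hs, by simpa using hlt⟩
  · exact exists_fdim_exposedFace_lt_of_exists_lt hu₀ hηu₀ hψu₀ hψ hy₀ ⟨s, hs, hgt⟩

theorem exists_facet_convexHull {T : Finset (Amb d)} (hT : T.Nonempty) {n : ℕ}
    (hdim : fdim (convexHull ℝ (T : Set (Amb d))) = n + 1) :
    ∃ E, IsFaceOf (convexHull ℝ (T : Set (Amb d))) E ∧ E.Nonempty ∧ fdim E = n := by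
  have hgrow : ∀ m ≤ n, ∃ η : Amb d →ₗ[ℝ] ℝ,
      (∃ u ∈ linSpan (convexHull ℝ (T : Set (Amb d))), η u ≠ 0) ∧
      m ≤ fdim (exposedFace (convexHull ℝ (T : Set (Amb d))) η) := by
    intro m hm
    induction m with
    | zero =>
      obtain ⟨u, hu, hu0⟩ := Submodule.exists_mem_ne_zero_of_ne_bot
        (p := linSpan (convexHull ℝ (T : Set (Amb d)))) fun h => by
          rw [fdim, h, finrank_bot] at hdim
          omega
      obtain ⟨η, hηu, -⟩ :=
        Submodule.exists_le_ker_of_notMem (K := ℝ) (p := ⊥) (by simpa using hu0)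
      exact ⟨η, ⟨u, hu, hηu⟩, Nat.zero_le _⟩
    | succ m ih =>
      obtain ⟨η, hη, hmη⟩ := ih (by omega)
      by_cases h : m + 1 ≤ fdim (exposedFace (convexHull ℝ (T : Set (Amb d))) η)
      · exact ⟨η, hη, h⟩
      · obtain ⟨χ, hχ, hlt⟩ := exists_fdim_exposedFace_lt hT (η := η) (by omega)
        exact ⟨χ, hχ, by omega⟩
  obtain ⟨η, hη, hn⟩ := hgrow n le_rfl
  have := fdim_exposedFace_lt hη
  exact ⟨exposedFace _ η, ⟨η, rfl⟩, exposedFace_convexHull_nonempty hT η, by omega⟩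

theorem exists_isFacetOf {S : Finset (Amb d)} {F : Set (Amb d)}
    (hF : IsFaceOf (convexHull ℝ (S : Set (Amb d))) F) (hFne : F.Nonempty) {n : ℕ}
    (hdim : fdim F = n + 1) :
    ∃ E, IsFacetOf F E ∧ IsFaceOf (convexHull ℝ (S : Set (Amb d))) E := by
  obtain ⟨φ, rfl⟩ := hF
  change (exposedFace _ φ).Nonempty at hFne
  change fdim (exposedFace _ φ) = n + 1 at hdim
  have hS : S.Nonempty :=
    let ⟨x, hx⟩ := hFne; Finset.coe_nonempty.1 (convexHull_nonempty_iff.1 ⟨x, hx.1⟩)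
  have hFT := exposedFace_convexHull_sup' hS φ
  have hT : (S.filter (φ · = S.sup' hS φ)).Nonempty := by
    rw [← Finset.coe_nonempty, ← convexHull_nonempty_iff (𝕜 := ℝ), ← hFT]
    exact hFne
  obtain ⟨E, hE, hEne, hEdim⟩ := exists_facet_convexHull hT (hFT ▸ hdim)
  have hEF : IsFaceOf (exposedFace (convexHull ℝ (S : Set (Amb d))) φ) E := hFT ▸ hE
  exact ⟨E, ⟨hEF, hEne, by rw [hEdim]; exact hdim.symm⟩,
    IsFaceOf.trans_convexHull ⟨φ, rfl⟩ hEF hEne⟩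

end Faces

section Orientation

variable {d : ℕ} {P F E : Set (Amb d)} {β γ : Set (Amb d) → ExteriorAlgebra ℝ (Amb d)}

open ExteriorAlgebra

theorem IsFacetOf.exists_inward (h : IsFacetOf F E) :
    ∃ z ∈ linSpan F, ∀ η, NormalOf F E η → η z < 0 := by
  obtain ⟨hEF, ⟨y, hy⟩, hdim⟩ := h
  obtain ⟨x, hx, hxE⟩ : ∃ x ∈ F, x ∉ E := by
    by_contra! h
    rw [Set.Subset.antisymm hEF.subset h] at hdim
    omega
  refine ⟨x - y, sub_mem_linSpan hx (hEF.subset hy), fun η hη => ?_⟩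
  subst hη
  exact map_sub_neg_of_notMem_exposedFace hx hxE hy

theorem IsOriEA.exists_eq_ιMulti {b : ExteriorAlgebra ℝ (Amb d)} (h : IsOriEA F b) {k : ℕ}
    (hk : fdim F = k) :
    b ≠ 0 ∧ ∃ w : Fin k → Amb d, (∀ i, w i ∈ linSpan F) ∧ b = ιMulti ℝ k w := by
  unfold IsOriEA at h
  rw [hk] at h
  exact h

theorem IsFacetOf.exists_mul_ι_eq_smul {bE bF : ExteriorAlgebra ℝ (Amb d)} (hEF : IsFacetOf F E)
    (hbE : IsOriEA E bE) (hbF : IsOriEA F bF) {z : Amb d} (hz : z ∈ linSpan F)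
    (hzE : z ∉ linSpan E) : ∃ μ : ℝ, μ ≠ 0 ∧ bE * ι ℝ z = μ • bF := by
  obtain ⟨hbE0, wE, hwE, rfl⟩ := hbE
  obtain ⟨hbF0, wF, hwF, rfl⟩ := hbF.exists_eq_ιMulti hEF.2.2.symm
  have hsnoc : ∀ i, (Fin.snoc wE z : Fin (fdim E + 1) → Amb d) i ∈ linSpan F :=
    Fin.lastCases (by simpa using hz) fun i => by simpa using linSpan_mono hEF.1.subset (hwE i)
  have hind : LinearIndependent ℝ (Fin.snoc wE z : Fin (fdim E + 1) → Amb d) :=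
    linearIndependent_finSnoc.2 ⟨ιMulti_ne_zero_iff.1 hbE0,
      fun h => hzE (Submodule.span_le.2 (Set.range_subset_iff.2 hwE) h)⟩
  obtain ⟨μ, hμ⟩ := exists_ιMulti_eq_smul hEF.2.2.symm hsnoc hwF hbF0
  rw [ιMulti_snoc] at hμ
  refine ⟨μ, fun h0 => ιMulti_ne_zero_iff.2 hind ?_, hμ⟩
  rw [ιMulti_snoc, hμ, h0, zero_smul]

theorem IsFacetOf.mul_ι_eq_smul {bE bF : ExteriorAlgebra ℝ (Amb d)} (hEF : IsFacetOf F E)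
    (hbE : IsOriEA E bE) {η : Amb d →ₗ[ℝ] ℝ} (hη : NormalOf F E η) {z v : Amb d}
    (hz : z ∈ linSpan F) (hv : v ∈ linSpan F) (hηv : η v ≠ 0) {l : ℝ}
    (hvF : bE * ι ℝ v = l • bF) : bE * ι ℝ z = (η z * l / η v) • bF := by
  obtain ⟨-, wE, hwE, rfl⟩ := hbE
  have := smul_ιMulti_mul_ι_eq (k := fdim E) (linSpan_mono hEF.1.subset) hEF.2.2.symm rfl hwE
    (fun x hx => hη.map_eq_zero hx) hz hv
  rw [hvF, smul_smul] at this
  rw [← inv_smul_smul₀ hηv (ιMulti ℝ _ wE * ι ℝ z), ← this, smul_smul]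
  congr 1
  field_simp

theorem InOriTarget.exists_neg_smul_of_inward (h : InOriTarget β F E) (hβE : IsOriEA E (β E))
    {z : Amb d} (hz : z ∈ linSpan F) (hzη : ∀ η, NormalOf F E η → η z < 0) :
    ∃ μ : ℝ, μ < 0 ∧ β E * ι ℝ z = μ • β F := by
  obtain ⟨hEF, v, hv, ⟨η, hη, hηv⟩, l, hl, hvF⟩ := h
  exact ⟨_, div_neg_of_neg_of_pos (mul_neg_of_neg_of_pos (hzη η hη) hl) hηv,
    hEF.mul_ι_eq_smul hβE hη hz hv hηv.ne' hvF⟩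

theorem InOriSource.exists_pos_smul_of_inward (h : InOriSource β F E) (hβE : IsOriEA E (β E))
    {z : Amb d} (hz : z ∈ linSpan F) (hzη : ∀ η, NormalOf F E η → η z < 0) :
    ∃ μ : ℝ, 0 < μ ∧ β E * ι ℝ z = μ • β F := by
  obtain ⟨hEF, v, hv, ⟨η, hη, hηv⟩, l, hl, hvF⟩ := h
  exact ⟨_, div_pos_of_neg_of_neg (mul_neg_of_neg_of_pos (hzη η hη) hl) hηv,
    hEF.mul_ι_eq_smul hβE hη hz hv hηv.ne hvF⟩

theorem IsFacetOf.inOriTarget_or_inOriSource (hEF : IsFacetOf F E) (hβE : IsOriEA E (β E))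
    (hβF : IsOriEA F (β F)) : InOriTarget β F E ∨ InOriSource β F E := by
  obtain ⟨z, hz, hzη⟩ := hEF.exists_inward
  obtain ⟨η, hη⟩ : ∃ η, NormalOf F E η := hEF.1
  have hzE : z ∉ linSpan E := fun h => (hzη η hη).ne (hη.map_eq_zero h)
  obtain ⟨μ, hμ, hzF⟩ := hEF.exists_mul_ι_eq_smul hβE hβF hz hzE
  rcases hμ.lt_or_gt with hneg | hpos
  · refine Or.inl ⟨hEF, -z, neg_mem hz, ⟨η, hη, by simpa using hzη η hη⟩, -μ, by linarith, ?_⟩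
    rw [map_neg, mul_neg, hzF, neg_smul]
  · exact Or.inr ⟨hEF, z, hz, ⟨η, hη, hzη η hη⟩, μ, hpos, hzF⟩

theorem InOriTarget.exists_pos_smul_of_eq_smul {c : ℝ} (hβ : InOriTarget β F E)
    (hγ : InOriTarget γ F E) (hβE : IsOriEA E (β E)) (hγE : IsOriEA E (γ E)) (hc : 0 < c)
    (hE : β E = c • γ E) : ∃ l : ℝ, 0 < l ∧ β F = l • γ F := by
  obtain ⟨z, hz, hzη⟩ := hβ.1.exists_inward
  obtain ⟨μ, hμ, hβz⟩ := hβ.exists_neg_smul_of_inward hβE hz hzη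
  obtain ⟨ν, hν, hγz⟩ := hγ.exists_neg_smul_of_inward hγE hz hzη
  exact exists_pos_smul_of_mul_eq_smul hc hE (mul_pos_of_neg_of_neg hμ hν) hβz hγz

theorem InOriSource.exists_pos_smul_of_eq_smul {c : ℝ} (hβ : InOriSource β F E)
    (hγ : InOriSource γ F E) (hβE : IsOriEA E (β E)) (hγE : IsOriEA E (γ E)) (hc : 0 < c)
    (hE : β E = c • γ E) : ∃ l : ℝ, 0 < l ∧ β F = l • γ F := by
  obtain ⟨z, hz, hzη⟩ := hβ.1.exists_inward
  obtain ⟨μ, hμ, hβz⟩ := hβ.exists_pos_smul_of_inward hβE hz hzη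
  obtain ⟨ν, hν, hγz⟩ := hγ.exists_pos_smul_of_inward hγE hz hzη
  exact exists_pos_smul_of_mul_eq_smul hc hE (mul_pos hμ hν) hβz hγz

theorem IsFOri.exists_pos_smul_of_fdim_eq_zero (hβ : IsFOri P β) (hγ : IsFOri P γ)
    (hF : IsFaceOf P F) (hFne : F.Nonempty) (h0 : fdim F = 0) :
    ∃ l : ℝ, 0 < l ∧ β F = l • γ F := by
  obtain ⟨b, hb, hβF⟩ := hβ.2 F hF hFne h0
  obtain ⟨c, hc, hγF⟩ := hγ.2 F hF hFne h0
  refine ⟨b / c, div_pos hb hc, ?_⟩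
  rw [hβF, hγF, Algebra.algebraMap_eq_smul_one, Algebra.algebraMap_eq_smul_one, smul_smul,
    div_mul_cancel₀ _ hc.ne']

end Orientation

theorem stmt8 (d : ℕ) (S : Finset (Amb d)) (P : Set (Amb d))
    (hP : P = convexHull ℝ (S : Set (Amb d)))
    (β γ : Set (Amb d) → ExteriorAlgebra ℝ (Amb d))
    (hβ : IsFOri P β) (hγ : IsFOri P γ)
    (hsame : ∀ F : Set (Amb d), IsFaceOf P F → F.Nonempty →
      ∀ E : Set (Amb d),
        (InOriTarget β F E ↔ InOriTarget γ F E) ∧ (InOriSource β F E ↔ InOriSource γ F E)) :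
    ∀ F : Set (Amb d), IsFaceOf P F → F.Nonempty →
      ∃ l : ℝ, 0 < l ∧ β F = l • γ F := by
  subst hP
  intro F hF hFne
  induction hn : fdim F using Nat.strong_induction_on generalizing F with
  | _ n ih =>
  rcases n with _ | k
  · exact hβ.exists_pos_smul_of_fdim_eq_zero hγ hF hFne hn
  obtain ⟨E, hEF, hEP⟩ := exists_isFacetOf hF hFne hn
  have hEne := hEF.2.1
  obtain ⟨c, hc, hβγE⟩ := ih k k.lt_succ_self E hEP hEne (by have := hEF.2.2; omega)
  have hβE := hβ.1 E hEP hEne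
  have hγE := hγ.1 E hEP hEne
  rcases hEF.inOriTarget_or_inOriSource hβE (hβ.1 F hF hFne) with h | h
  · exact h.exists_pos_smul_of_eq_smul ((hsame F hF hFne E).1.1 h) hβE hγE hc hβγE
  · exact h.exists_pos_smul_of_eq_smul ((hsame F hF hFne E).2.1 h) hβE hγE hc hβγE
end
end

section
/- For subsets L ⊆ [n] = {1,…,n} and A ⊆ [n] \ L with F = (L, A) a face of the cyclic n-cube (a zonotope generated by points on the Veronese curve) endowed with the canonical frame, let l ∈ L and consider the two parallel facets of F determined by l. Then: (1) the facet (L \ {l}, A) lies in the target of F if and only if l is odd in L \ {l}, i.e., |{ℓ ∈ L \ {l} : ℓ > l}| is odd; and (2) the facet (L \ {l}, A ∪ {l}) lies in the target of F if and only if l is even in L \ {l}. The complementary parity conditions characterize the source. -/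
noncomputable section
open scoped Classical

variable {d : ℕ}

/-!
The face `(L, A)` is the parallelotope spanned by the `ξ m`, `m ∈ L`, based at `∑ a ∈ A, ξ a`;
with `k + 1 = #L`, the projection `π_{k+1}` maps it onto the parallelotope spanned by the
truncated moment vectors `π_{k+1} (ξ m)`, which are still independent. Hence `η` is a normal of
the facet `(L \ {l}, A)` (resp. `(L \ {l}, A ∪ {l})`) after projection iff `η` kills
`π_{k+1} (ξ m)` for `m ≠ l` and `η (π_{k+1} (ξ l)) < 0` (resp. `> 0`).

Now `x ↦ η (π_{k+1} (ξ x))` is a polynomial of degree `≤ k` in `x` with leading coefficient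
`η (e_{k+1})`, vanishing at the `k` points `t m`, `m ≠ l`. So it equals
`η (e_{k+1}) * ∏_{m ≠ l} (x - t m)`, and the sign of `η (e_{k+1})` relative to that of
`η (π_{k+1} (ξ l))` is the sign of `∏_{m ≠ l} (t l - t m)`, i.e. `(-1) ^ #{m ∈ L \ {l} | l < m}`.
-/

open Finset

section Parallelotope

variable {ι V W : Type*} [AddCommGroup V] [Module ℝ V] [AddCommGroup W] [Module ℝ W]

def parallelotope (v : ι → V) (L : Finset ι) (b : V) : Set V :=
  {x | ∃ c : ι → ℝ, (∀ i ∈ L, c i ∈ Set.Icc (0 : ℝ) 1) ∧ x = ∑ i ∈ L, c i • v i + b}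

variable {v : ι → V} {L : Finset ι} {b : V} {l : ι}

lemma setOf_sum_smul_add_eq_parallelotope (v : ι → V) (L : Finset ι) (b : V) :
    {x | ∃ c : ι → ℝ, (∀ i, c i ∈ Set.Icc (0 : ℝ) 1) ∧ x = ∑ i ∈ L, c i • v i + b} =
      parallelotope v L b := by
  ext x
  constructor
  · rintro ⟨c, hc, rfl⟩
    exact ⟨c, fun i _ => hc i, rfl⟩
  · rintro ⟨c, hc, rfl⟩
    refine ⟨fun i => if i ∈ L then c i else 0, fun i => ?_, ?_⟩
    · dsimp only
      split_ifs with hi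
      exacts [hc i hi, ⟨le_rfl, zero_le_one⟩]
    · exact congrArg (· + b) (sum_congr rfl fun i hi => by simp [hi])

lemma base_mem_parallelotope : b ∈ parallelotope v L b :=
  ⟨0, fun _ _ => ⟨le_rfl, zero_le_one⟩, by simp⟩

lemma add_mem_parallelotope [DecidableEq ι] (hl : l ∈ L) : v l + b ∈ parallelotope v L b :=
  ⟨Pi.single l 1, fun i _ => by by_cases h : i = l <;> simp [h],
    by simp [Pi.single_apply, sum_ite_eq', hl]⟩

lemma parallelotope_erase_subset [DecidableEq ι] (hl : l ∈ L) :
    parallelotope v (L.erase l) b ⊆ parallelotope v L b := by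
  rintro _ ⟨c, hc, rfl⟩
  refine ⟨Function.update c l 0, fun i hi => ?_, ?_⟩
  · by_cases h : i = l
    · simp [h]
    · simpa [h] using hc i (mem_erase.2 ⟨h, hi⟩)
  · rw [← add_sum_erase L _ hl]
    simp only [Function.update_self, zero_smul, zero_add]
    congr 1
    exact sum_congr rfl fun i hi => by rw [Function.update_of_ne (ne_of_mem_erase hi)]

lemma parallelotope_eq_neg : parallelotope v L b = parallelotope (-v) L (∑ i ∈ L, v i + b) := by
  ext x
  constructor <;> rintro ⟨c, hc, rfl⟩ <;>
    refine ⟨1 - c, fun i hi => ⟨by simp [(hc i hi).2], by simp [(hc i hi).1]⟩, ?_⟩ <;>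
    simp only [Pi.sub_apply, Pi.one_apply, Pi.neg_apply, smul_neg, sub_smul, one_smul,
      sum_neg_distrib, sum_sub_distrib] <;>
    abel

lemma image_parallelotope (f : V →ₗ[ℝ] W) :
    f '' parallelotope v L b = parallelotope (f ∘ v) L (f b) := by
  ext x
  constructor
  · rintro ⟨_, ⟨c, hc, rfl⟩, rfl⟩
    exact ⟨c, hc, by simp [map_sum]⟩
  · rintro ⟨c, hc, rfl⟩
    exact ⟨_, ⟨c, hc, rfl⟩, by simp [map_sum]⟩

end Parallelotope

section Facet

variable {ι V : Type*} [DecidableEq ι] [AddCommGroup V] [Module ℝ V]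
  {v : ι → V} {L : Finset ι} {b : V} {l : ι} {η : V →ₗ[ℝ] ℝ}

lemma apply_sum_smul_add_of_apply_erase_eq_zero (hl : l ∈ L)
    (hker : ∀ m ∈ L.erase l, η (v m) = 0) (c : ι → ℝ) :
    η (∑ i ∈ L, c i • v i + b) = c l * η (v l) + η b := by
  simp only [← add_sum_erase L _ hl, map_add, map_sum, map_smul, smul_eq_mul]
  rw [sum_eq_zero fun m hm => by rw [hker m hm, mul_zero], add_zero]

lemma argmax_parallelotope_eq_erase_iff (hl : l ∈ L)
    (hv : v l ∉ Submodule.span ℝ (v '' ↑(L.erase l))) :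
    {x ∈ parallelotope v L b | ∀ y ∈ parallelotope v L b, η y ≤ η x} =
        parallelotope v (L.erase l) b ↔
      (∀ m ∈ L.erase l, η (v m) = 0) ∧ η (v l) < 0 := by
  constructor
  · intro h
    have hmax : ∀ x ∈ parallelotope v (L.erase l) b, ∀ y ∈ parallelotope v L b, η y ≤ η x :=
      fun x hx => (h.symm ▸ hx : x ∈ {x ∈ _ | _}).2
    have hb := hmax b base_mem_parallelotope
    have hker : ∀ m ∈ L.erase l, η (v m) = 0 := fun m hm => by
      have h₁ := hb _ (parallelotope_erase_subset hl (add_mem_parallelotope hm))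
      have h₂ := hmax _ (add_mem_parallelotope hm) b base_mem_parallelotope
      simp only [map_add] at h₁ h₂
      linarith
    refine ⟨hker, lt_of_le_of_ne ?_ fun hl0 => hv ?_⟩
    · simpa using hb _ (add_mem_parallelotope hl)
    -- if `η` vanished on `v l`, the far vertex `v l + b` would be maximal as well
    have hvl : v l + b ∈ parallelotope v (L.erase l) b := by
      rw [← h]
      refine ⟨add_mem_parallelotope hl, fun y hy => ?_⟩
      simpa [hl0] using hb y hy
    obtain ⟨c, -, hc⟩ := hvl
    rw [add_left_inj] at hc
    exact hc ▸ Submodule.sum_mem _ fun i hi =>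
      Submodule.smul_mem _ _ (Submodule.subset_span ⟨i, hi, rfl⟩)
  · rintro ⟨hker, hneg⟩
    have hval := apply_sum_smul_add_of_apply_erase_eq_zero (b := b) hl hker
    ext x
    constructor
    · rintro ⟨⟨c, hc, rfl⟩, hmax⟩
      have hcl : c l = 0 := by
        have := hmax b base_mem_parallelotope
        rw [hval] at this
        nlinarith [(hc l hl).1]
      refine ⟨c, fun i hi => hc i (mem_of_mem_erase hi), ?_⟩
      rw [← sum_erase L (show c l • v l = 0 by simp [hcl])]
    · intro hx
      refine ⟨parallelotope_erase_subset hl hx, ?_⟩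
      obtain ⟨c, -, rfl⟩ := hx
      rintro _ ⟨c', hc', rfl⟩
      rw [hval, map_add, map_sum, sum_eq_zero fun m hm => by simp [hker m hm]]
      nlinarith [(hc' l hl).1]

lemma argmax_parallelotope_eq_erase_add_iff (hl : l ∈ L)
    (hv : v l ∉ Submodule.span ℝ (v '' ↑(L.erase l))) :
    {x ∈ parallelotope v L b | ∀ y ∈ parallelotope v L b, η y ≤ η x} =
        parallelotope v (L.erase l) (v l + b) ↔
      (∀ m ∈ L.erase l, η (v m) = 0) ∧ 0 < η (v l) := by
  have hv' : (-v) l ∉ Submodule.span ℝ ((-v) '' ↑(L.erase l)) := fun h => hv <| by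
    have hle : Submodule.span ℝ ((-v) '' ↑(L.erase l)) ≤ Submodule.span ℝ (v '' ↑(L.erase l)) :=
      Submodule.span_le.2 <| by
        rintro _ ⟨i, hi, rfl⟩
        exact neg_mem (Submodule.subset_span ⟨i, hi, rfl⟩)
    simpa using hle h
  rw [parallelotope_eq_neg (L := L), parallelotope_eq_neg (L := L.erase l), ← add_assoc,
    sum_erase_add L _ hl, argmax_parallelotope_eq_erase_iff hl hv']
  simp

end Facet

section FacesOfParallelotope

variable {ι : Type*} [DecidableEq ι] {v : ι → Amb d} {L : Finset ι} {b : Amb d} {l : ι}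

lemma isFaceOf_parallelotope_erase (hl : l ∈ L)
    (hv : v l ∉ Submodule.span ℝ (v '' ↑(L.erase l))) :
    IsFaceOf (parallelotope v L b) (parallelotope v (L.erase l) b) := by
  obtain ⟨f, hfl, hker⟩ := Submodule.exists_le_ker_of_notMem hv
  refine ⟨-(f (v l))⁻¹ • f, ((argmax_parallelotope_eq_erase_iff hl hv).2 ⟨fun m hm => ?_, ?_⟩).symm⟩
  · simp [LinearMap.mem_ker.1 (hker (Submodule.subset_span ⟨m, hm, rfl⟩))]
  · simp [hfl]

lemma isFaceOf_parallelotope_erase_add (hl : l ∈ L)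
    (hv : v l ∉ Submodule.span ℝ (v '' ↑(L.erase l))) :
    IsFaceOf (parallelotope v L b) (parallelotope v (L.erase l) (v l + b)) := by
  obtain ⟨f, hfl, hker⟩ := Submodule.exists_le_ker_of_notMem hv
  refine ⟨(f (v l))⁻¹ • f,
    ((argmax_parallelotope_eq_erase_add_iff hl hv).2 ⟨fun m hm => ?_, ?_⟩).symm⟩
  · simp [LinearMap.mem_ker.1 (hker (Submodule.subset_span ⟨m, hm, rfl⟩))]
  · simp [hfl]

variable (f : Amb d →ₗ[ℝ] Amb d) (η : Amb d →ₗ[ℝ] ℝ)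

lemma normalOf_image_parallelotope_erase_iff (hl : l ∈ L)
    (hv : f (v l) ∉ Submodule.span ℝ ((f ∘ v) '' ↑(L.erase l))) :
    NormalOf (f '' parallelotope v L b) (f '' parallelotope v (L.erase l) b) η ↔
      (∀ m ∈ L.erase l, η (f (v m)) = 0) ∧ η (f (v l)) < 0 := by
  rw [NormalOf, image_parallelotope, image_parallelotope, eq_comm]
  exact argmax_parallelotope_eq_erase_iff hl hv

lemma normalOf_image_parallelotope_erase_add_iff (hl : l ∈ L)
    (hv : f (v l) ∉ Submodule.span ℝ ((f ∘ v) '' ↑(L.erase l))) :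
    NormalOf (f '' parallelotope v L b) (f '' parallelotope v (L.erase l) (v l + b)) η ↔
      (∀ m ∈ L.erase l, η (f (v m)) = 0) ∧ 0 < η (f (v l)) := by
  rw [NormalOf, image_parallelotope, image_parallelotope, map_add, eq_comm]
  exact argmax_parallelotope_eq_erase_add_iff hl hv

end FacesOfParallelotope

lemma inTarget_iff {B : Module.Basis (Fin d) ℝ (Amb d)} {F E : Set (Amb d)} {k : ℕ}
    (hE : IsFaceOf F E) (hne : E.Nonempty) (hF : fdim F = k + 1) (hEk : fdim E = k) :
    InTarget B F E ↔
      ∃ η, NormalOf (proj B (k + 1) '' F) (proj B (k + 1) '' E) η ∧ 0 < η (fvec B k) := by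
  simp [InTarget, InKTarget, hE, hne, hF, hEk]

lemma inSource_iff {B : Module.Basis (Fin d) ℝ (Amb d)} {F E : Set (Amb d)} {k : ℕ}
    (hE : IsFaceOf F E) (hne : E.Nonempty) (hF : fdim F = k + 1) (hEk : fdim E = k) :
    InSource B F E ↔
      ∃ η, NormalOf (proj B (k + 1) '' F) (proj B (k + 1) '' E) η ∧ η (fvec B k) < 0 := by
  simp [InSource, InKSource, hE, hne, hF, hEk]

lemma linSpan_parallelotope {ι : Type*} (v : ι → Amb d) (M : Finset ι) (b : Amb d) :
    linSpan (parallelotope v M b) = Submodule.span ℝ (v '' ↑M) := by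
  apply le_antisymm
  · rw [linSpan, Submodule.span_le]
    rintro _ ⟨_, ⟨c, -, rfl⟩, _, ⟨c', -, rfl⟩, rfl⟩
    rw [add_sub_add_right_eq_sub, ← sum_sub_distrib]
    exact Submodule.sum_mem _ fun i hi => by
      rw [← sub_smul]
      exact Submodule.smul_mem _ _ (Submodule.subset_span ⟨i, hi, rfl⟩)
  · rw [Submodule.span_le]
    rintro _ ⟨m, hm, rfl⟩
    classical
    exact Submodule.subset_span ⟨_, add_mem_parallelotope hm, b, base_mem_parallelotope,
      (add_sub_cancel_right _ _).symm⟩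

lemma fdim_parallelotope {ι : Type*} {v : ι → Amb d} (hv : LinearIndependent ℝ v)
    (M : Finset ι) (b : Amb d) : fdim (parallelotope v M b) = M.card := by
  rw [fdim, linSpan_parallelotope, Set.image_eq_range,
    finrank_span_eq_card (b := fun m : (M : Set ι) => v m) (hv.comp _ Subtype.val_injective)]
  simp
/-- With `e = fvec B` this is `π_n (ξ x)`, the moment curve truncated to its first `n`
coordinates. -/
def momentVec {V : Type*} [AddCommGroup V] [Module ℝ V] (e : ℕ → V) (n : ℕ) (x : ℝ) : V :=
  ∑ j ∈ range n, x ^ j • e j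

open Polynomial in
lemma apply_momentVec_eq_mul_prod {ι V : Type*} [AddCommGroup V] [Module ℝ V]
    (φ : V →ₗ[ℝ] ℝ) (e : ℕ → V) {S : Finset ι} {u : ι → ℝ} (hu : Set.InjOn u S)
    (hφ : ∀ m ∈ S, φ (momentVec e (#S + 1) (u m)) = 0) (x : ℝ) :
    φ (momentVec e (#S + 1) x) = φ (e #S) * ∏ m ∈ S, (x - u m) := by
  set H : ℝ[X] := ∑ j ∈ range (#S + 1), C (φ (e j)) * X ^ j
  have hH : ∀ y, φ (momentVec e (#S + 1) y) = H.eval y := fun y => by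
    simp only [H, momentVec, map_sum, map_smul, smul_eq_mul, eval_finsetSum, eval_mul, eval_C,
      eval_pow, eval_X]
    exact sum_congr rfl fun _ _ => mul_comm _ _
  have hf : (∏ m ∈ S, (X - C (u m))).coeff #S = 1 := by
    simpa using (monic_prod_X_sub_C u S).coeff_natDegree
  have hzero : H - C (φ (e #S)) * ∏ m ∈ S, (X - C (u m)) = 0 := by
    classical
    apply eq_zero_of_degree_lt_of_eval_finset_eq_zero (S.image u)
    · rw [card_image_of_injOn hu, degree_lt_iff_coeff_zero]
      intro n hn
      rw [coeff_sub, coeff_C_mul, finsetSum_coeff]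
      simp only [coeff_C_mul_X_pow]
      rcases hn.eq_or_lt with rfl | hn
      · simp [hf]
      · rw [coeff_eq_zero_of_natDegree_lt (by simpa using hn),
          sum_eq_zero fun j hj => if_neg (by simp at hj; omega)]
        simp
    · simp only [mem_image, forall_exists_index, and_imp]
      rintro _ m hm rfl
      rw [eval_sub, ← hH, hφ m hm, eval_mul, eval_prod, prod_eq_zero hm (by simp)]
      simp
  have := congrArg (eval x) hzero
  rw [eval_sub, eval_mul, eval_C, eval_prod, eval_zero, sub_eq_zero] at this
  simpa [hH] using this

lemma exists_apply_fvec_eq (B : Module.Basis (Fin d) ℝ (Amb d)) (g : ℕ → ℝ) :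
    ∃ η : Amb d →ₗ[ℝ] ℝ, ∀ j < d, η (fvec B j) = g j :=
  ⟨B.constr ℝ fun i => g i, fun j hj => by simp [fvec, hj]⟩

open Polynomial in
lemma exists_apply_momentVec_eq_prod {ι : Type*} (B : Module.Basis (Fin d) ℝ (Amb d))
    {S : Finset ι} (hS : #S < d) (u : ι → ℝ) :
    ∃ η : Amb d →ₗ[ℝ] ℝ, η (fvec B #S) = 1 ∧
      ∀ x, η (momentVec (fvec B) (#S + 1) x) = ∏ m ∈ S, (x - u m) := by
  set f : ℝ[X] := ∏ m ∈ S, (X - C (u m))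
  obtain ⟨η, hη⟩ := exists_apply_fvec_eq B f.coeff
  refine ⟨η, by simpa [hη _ hS, f] using (monic_prod_X_sub_C u S).coeff_natDegree, fun x => ?_⟩
  have hf : f.eval x = ∏ m ∈ S, (x - u m) := by simp [f, eval_prod]
  rw [← hf, eval_eq_sum_range' (n := #S + 1) (by simp [f])]
  simp only [momentVec, map_sum, map_smul, smul_eq_mul]
  exact sum_congr rfl fun j hj => by rw [hη j (by simp at hj; omega), mul_comm]

section MomentSign

variable {ι : Type*} (B : Module.Basis (Fin d) ℝ (Amb d)) {S : Finset ι} {u : ι → ℝ}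

lemma momentVec_notMem_span (hS : #S < d) {x₀ : ℝ} (hx₀ : ∀ m ∈ S, u m ≠ x₀) :
    momentVec (fvec B) (#S + 1) x₀ ∉
      Submodule.span ℝ ((fun m => momentVec (fvec B) (#S + 1) (u m)) '' ↑S) := by
  obtain ⟨η, -, hη⟩ := exists_apply_momentVec_eq_prod B hS u
  intro h
  have hle : Submodule.span ℝ ((fun m => momentVec (fvec B) (#S + 1) (u m)) '' ↑S) ≤
      LinearMap.ker η := Submodule.span_le.2 <| by
    rintro _ ⟨m, hm, rfl⟩
    simp [hη, prod_eq_zero hm]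
  have := LinearMap.mem_ker.1 (hle h)
  rw [hη] at this
  exact prod_ne_zero_iff.2 (fun m hm => sub_ne_zero.2 (hx₀ m hm).symm) this

lemma exists_pos_mul_apply_momentVec_iff (hu : Set.InjOn u S) (hS : #S < d) (x₀ a b : ℝ) :
    (∃ η : Amb d →ₗ[ℝ] ℝ, (∀ m ∈ S, η (momentVec (fvec B) (#S + 1) (u m)) = 0) ∧
        0 < a * η (momentVec (fvec B) (#S + 1) x₀) ∧ 0 < b * η (fvec B #S)) ↔
      0 < a * b * ∏ m ∈ S, (x₀ - u m) := by
  constructor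
  · rintro ⟨η, hker, hx₀, hb⟩
    rw [apply_momentVec_eq_mul_prod η _ hu hker] at hx₀
    have h : 0 < (a * b * ∏ m ∈ S, (x₀ - u m)) * (η (fvec B #S) * η (fvec B #S)) := by
      linarith [mul_pos hx₀ hb]
    exact pos_of_mul_pos_left h (mul_self_nonneg _)
  · intro h
    obtain ⟨η, hη₁, hη⟩ := exists_apply_momentVec_eq_prod B hS u
    have hb : b ≠ 0 := by rintro rfl; simp at h
    refine ⟨b • η, fun m hm => by simp [hη, prod_eq_zero hm], ?_, ?_⟩
    · simpa [hη, mul_assoc] using h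
    · simpa [hη₁] using mul_self_pos.2 hb

end MomentSign

local notation "𝓔" => Pi.basisFun ℝ (Fin d)

lemma fvec_basisFun_apply (j : ℕ) (i : Fin d) : fvec 𝓔 j i = if j = i then 1 else 0 := by
  unfold fvec
  split_ifs with hj hji hji
  · simp [hji]
  · simp [Fin.ext_iff, Ne.symm hji]
  · omega
  · rfl

lemma proj_basisFun_apply (n : ℕ) (x : Amb d) (i : Fin d) :
    proj 𝓔 n x i = if (i : ℕ) < n then x i else 0 := by
  rw [proj, Module.Basis.constr_apply_fintype, Finset.sum_apply]
  simp only [Pi.basisFun_equivFun, LinearEquiv.refl_apply, Pi.basisFun_apply, Pi.smul_apply,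
    ite_apply, Pi.single_apply, Pi.zero_apply, smul_eq_mul, mul_ite, mul_one, mul_zero]
  rw [Finset.sum_eq_single i (fun j _ hj => by simp [Ne.symm hj]) (by simp)]
  simp

lemma linearIndependent_of_apply_eq_pow {t : Fin d → ℝ} (ht : Function.Injective t)
    {ξ : Fin d → Amb d} (hξ : ∀ i j, ξ i j = t i ^ (j : ℕ)) : LinearIndependent ℝ ξ := by
  have : ξ = (Matrix.vandermonde t).row := funext fun i => funext (hξ i)
  rw [this, Matrix.linearIndependent_rows_iff_isUnit, Matrix.isUnit_iff_isUnit_det]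
  exact (Matrix.det_vandermonde_ne_zero_iff.2 ht).isUnit

section CyclicCube

variable {t : Fin d → ℝ} {ξ : Fin d → Amb d} (hξ : ∀ i j, ξ i j = t i ^ (j : ℕ))
include hξ

lemma proj_basisFun_apply_eq_momentVec (n : ℕ) (m : Fin d) :
    proj 𝓔 n (ξ m) = momentVec (fvec 𝓔) n (t m) := by
  ext i
  simp [proj_basisFun_apply, momentVec, Finset.sum_apply, fvec_basisFun_apply, hξ]

lemma inTarget_inSource_parallelotope_facets (ht : StrictMono t) {L : Finset (Fin d)} {l : Fin d}
    (hl : l ∈ L) (b : Amb d) :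
    (InTarget 𝓔 (parallelotope ξ L b) (parallelotope ξ (L.erase l) b) ↔
      ∏ m ∈ L.erase l, (t l - t m) < 0) ∧
    (InTarget 𝓔 (parallelotope ξ L b) (parallelotope ξ (L.erase l) (ξ l + b)) ↔
      0 < ∏ m ∈ L.erase l, (t l - t m)) ∧
    (InSource 𝓔 (parallelotope ξ L b) (parallelotope ξ (L.erase l) b) ↔
      0 < ∏ m ∈ L.erase l, (t l - t m)) ∧
    (InSource 𝓔 (parallelotope ξ L b) (parallelotope ξ (L.erase l) (ξ l + b)) ↔
      ∏ m ∈ L.erase l, (t l - t m) < 0) := by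
  have hξind := linearIndependent_of_apply_eq_pow ht.injective hξ
  have hv := hξind.notMem_span_image (s := ↑(L.erase l)) (by simp : l ∉ (L.erase l : Set (Fin d)))
  have hF : fdim (parallelotope ξ L b) = #(L.erase l) + 1 := by
    rw [fdim_parallelotope hξind, card_erase_add_one hl]
  have hk : #(L.erase l) < d := by
    simpa using (card_le_univ L).trans_lt' (card_erase_lt_of_mem hl)
  have hπξ : proj 𝓔 (#(L.erase l) + 1) ∘ ξ = fun m => momentVec (fvec 𝓔) (#(L.erase l) + 1) (t m) :=
    funext (proj_basisFun_apply_eq_momentVec hξ _)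
  have hπv : proj 𝓔 (#(L.erase l) + 1) (ξ l) ∉
      Submodule.span ℝ ((proj 𝓔 (#(L.erase l) + 1) ∘ ξ) '' ↑(L.erase l)) := by
    rw [hπξ, proj_basisFun_apply_eq_momentVec hξ]
    exact momentVec_notMem_span _ hk fun m hm => ht.injective.ne (ne_of_mem_erase hm)
  have key := exists_pos_mul_apply_momentVec_iff 𝓔 ht.injective.injOn hk (t l)
  have hE₀ := isFaceOf_parallelotope_erase (b := b) hl hv
  have hE₁ := isFaceOf_parallelotope_erase_add (b := b) hl hv
  have hne₀ : (parallelotope ξ (L.erase l) b).Nonempty := ⟨_, base_mem_parallelotope⟩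
  have hne₁ : (parallelotope ξ (L.erase l) (ξ l + b)).Nonempty := ⟨_, base_mem_parallelotope⟩
  rw [inTarget_iff hE₀ hne₀ hF (fdim_parallelotope hξind _ _),
    inTarget_iff hE₁ hne₁ hF (fdim_parallelotope hξind _ _),
    inSource_iff hE₀ hne₀ hF (fdim_parallelotope hξind _ _),
    inSource_iff hE₁ hne₁ hF (fdim_parallelotope hξind _ _)]
  simp only [normalOf_image_parallelotope_erase_iff _ _ hl hπv,
    normalOf_image_parallelotope_erase_add_iff _ _ hl hπv, proj_basisFun_apply_eq_momentVec hξ]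
  refine ⟨?_, ?_, ?_, ?_⟩
  · simpa [and_assoc] using key (-1) 1
  · simpa [and_assoc] using key 1 1
  · simpa [and_assoc] using key (-1) (-1)
  · simpa [and_assoc] using key 1 (-1)

end CyclicCube

lemma prod_eq_neg_one_pow_mul_prod_abs {ι R : Type*} [CommRing R] [LinearOrder R]
    [IsStrictOrderedRing R] (S : Finset ι) (g : ι → R) :
    ∏ i ∈ S, g i = (-1) ^ #{i ∈ S | g i < 0} * ∏ i ∈ S, |g i| := by
  classical
  induction S using Finset.induction_on with
  | empty => simp
  | insert a S ha ih =>
    rw [prod_insert ha, prod_insert ha, filter_insert, ih]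
    split_ifs with h
    · rw [card_insert_of_notMem (by simp [ha]), abs_of_neg h]
      ring
    · rw [abs_of_nonneg (not_lt.1 h)]
      ring

section Parity

variable {ι : Type*} [LinearOrder ι] {t : ι → ℝ} (ht : StrictMono t) {S : Finset ι} {l : ι}
include ht

lemma prod_sub_eq_neg_one_pow_mul :
    ∏ m ∈ S, (t l - t m) = (-1) ^ #{m ∈ S | l < m} * ∏ m ∈ S, |t l - t m| := by
  rw [prod_eq_neg_one_pow_mul_prod_abs]
  simp_rw [sub_neg, ht.lt_iff_lt]

lemma prod_abs_sub_pos (hl : l ∉ S) : 0 < ∏ m ∈ S, |t l - t m| :=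
  prod_pos fun _ hm => abs_pos.2 (sub_ne_zero.2 (ht.injective.ne (ne_of_mem_of_not_mem hm hl).symm))

lemma zero_lt_prod_sub_iff_even (hl : l ∉ S) :
    0 < ∏ m ∈ S, (t l - t m) ↔ Even #{m ∈ S | l < m} := by
  rw [prod_sub_eq_neg_one_pow_mul ht]
  rcases Nat.even_or_odd #{m ∈ S | l < m} with h | h
  · simp [h, h.neg_one_pow, prod_abs_sub_pos ht hl]
  · simp [Nat.not_even_iff_odd.2 h, h.neg_one_pow, (prod_abs_sub_pos ht hl).le]

lemma prod_sub_neg_iff_odd (hl : l ∉ S) :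
    ∏ m ∈ S, (t l - t m) < 0 ↔ Odd #{m ∈ S | l < m} := by
  rw [prod_sub_eq_neg_one_pow_mul ht]
  rcases Nat.even_or_odd #{m ∈ S | l < m} with h | h
  · simp [Nat.not_odd_iff_even.2 h, h.neg_one_pow, (prod_abs_sub_pos ht hl).le]
  · simp [h, h.neg_one_pow, prod_abs_sub_pos ht hl]

end Parity

theorem stmt12_general (d : ℕ) (t : Fin d → ℝ) (ht : StrictMono t)
    (ξ : Fin d → Amb d) (hξ : ∀ i j, ξ i j = t i ^ (j : ℕ))
    (faceLA : Finset (Fin d) → Finset (Fin d) → Set (Amb d))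
    (hface : ∀ L A : Finset (Fin d), faceLA L A =
      {x | ∃ c : Fin d → ℝ, (∀ i, c i ∈ Set.Icc (0:ℝ) 1) ∧
        x = (∑ i ∈ L, c i • ξ i) + ∑ a ∈ A, ξ a})
    (L A : Finset (Fin d)) (hLA : Disjoint L A)
    (l : Fin d) (hl : l ∈ L)
    (B : Module.Basis (Fin d) ℝ (Amb d)) (hB : B = Pi.basisFun ℝ (Fin d)) :
    (InTarget B (faceLA L A) (faceLA (L.erase l) A) ↔
      Odd ((L.erase l).filter (fun m => l < m)).card) ∧
    (InTarget B (faceLA L A) (faceLA (L.erase l) (insert l A)) ↔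
      Even ((L.erase l).filter (fun m => l < m)).card) ∧
    (InSource B (faceLA L A) (faceLA (L.erase l) A) ↔
      Even ((L.erase l).filter (fun m => l < m)).card) ∧
    (InSource B (faceLA L A) (faceLA (L.erase l) (insert l A)) ↔
      Odd ((L.erase l).filter (fun m => l < m)).card) := by
  subst hB
  have hfaces : ∀ M A', faceLA M A' = parallelotope ξ M (∑ a ∈ A', ξ a) := fun M A' =>
    (hface M A').trans (setOf_sum_smul_add_eq_parallelotope ξ M _)
  rw [hfaces, hfaces, hfaces, sum_insert (disjoint_left.1 hLA hl)]
  obtain ⟨h₁, h₂, h₃, h₄⟩ := inTarget_inSource_parallelotope_facets hξ ht hl (∑ a ∈ A, ξ a)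
  rw [h₁, h₂, h₃, h₄, prod_sub_neg_iff_odd ht (notMem_erase l L),
    zero_lt_prod_sub_iff_even ht (notMem_erase l L)]
  exact ⟨Iff.rfl, Iff.rfl, Iff.rfl, Iff.rfl⟩

theorem stmt12 (d : ℕ) (t : Fin d → ℝ) (ht : StrictMono t)
    (ξ : Fin d → Amb d) (hξ : ∀ i j, ξ i j = t i ^ (j : ℕ))
    (Z : Set (Amb d))
    (hZ : Z = {x | ∃ c : Fin d → ℝ, (∀ i, c i ∈ Set.Icc (0:ℝ) 1) ∧ x = ∑ i, c i • ξ i})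
    (faceLA : Finset (Fin d) → Finset (Fin d) → Set (Amb d))
    (hface : ∀ L A : Finset (Fin d), faceLA L A =
      {x | ∃ c : Fin d → ℝ, (∀ i, c i ∈ Set.Icc (0:ℝ) 1) ∧
        x = (∑ i ∈ L, c i • ξ i) + ∑ a ∈ A, ξ a})
    (L A : Finset (Fin d)) (hLA : Disjoint L A)
    (hF : IsFaceOf Z (faceLA L A)) (l : Fin d) (hl : l ∈ L)
    (B : Module.Basis (Fin d) ℝ (Amb d)) (hB : B = Pi.basisFun ℝ (Fin d)) :
    (InTarget B (faceLA L A) (faceLA (L.erase l) A) ↔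
      Odd ((L.erase l).filter (fun m => l < m)).card) ∧
    (InTarget B (faceLA L A) (faceLA (L.erase l) (insert l A)) ↔
      Even ((L.erase l).filter (fun m => l < m)).card) ∧
    (InSource B (faceLA L A) (faceLA (L.erase l) A) ↔
      Even ((L.erase l).filter (fun m => l < m)).card) ∧
    (InSource B (faceLA L A) (faceLA (L.erase l) (insert l A)) ↔
      Odd ((L.erase l).filter (fun m => l < m)).card) :=
  stmt12_general d t ht ξ hξ faceLA hface L A hLA l hl B hB

end
end

section
/- In the augmented chain complex of the d-th Street oriental, define for a basis element x = [p₀,…,p_k] (an ordered (k+1)-subset of {0,…,d}) the positive parts of the boundary by ∂⁺x = Σ_{i even} [p₀,…,p̂_i,…,p_k] and ∂⁻x = Σ_{i odd} [p₀,…,p̂_i,…,p_k]. Then ∂ = ∂⁺ − ∂⁻ satisfies ∂∘∂ = 0, the augmentation ε([p]) = 1 satisfies ε∘∂ = 0, and moreover the basis is strongly loop-free: the transitive closure of the relation b <_ℕ b', defined by 'b appears in ∂⁻(b') or b' appears in ∂⁺(b)', is a partial order (antisymmetric). -/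
/-!
Write `rank s p` for the index of `p` in `s`, so that the face `s \ {p}` enters `∂s` with sign
`(-1) ^ rank s p`. In `∂∂s` each face `s \ {p, q}` arises twice, and deleting the smaller vertex
first lowers the index of the larger one by one, so the two signs are opposite. For `ε∂ = 0` only
edges matter, and `∂[a, b] = [b] - [a]`.

Loop-freeness comes from a strict monovariant: the alternating sum `Σᵢ (-1)ⁱ 3 ^ (d - pᵢ)` over
`[p₀,…,p_k]` decreases along `<_ℕ`. Deleting `p_i` changes it by `(-1)ⁱ 3 ^ (d - pᵢ)` plus twice a
signed sum of the weights of the later vertices, and `2 Σ_{e<m} 3 ^ e < 3 ^ m`.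
-/

noncomputable section
open scoped Classical

variable {d : ℕ}

/-- The positive part `∂⁺` of the simplicial boundary of the basis element
`[p₀,…,p_k]` (encoded as a finset): the sum of the deletions of the `p_i` with
`i` even, `i` being the rank of `p_i`. -/
def bndP (s : Finset (Fin (d+1))) : Finset (Fin (d+1)) →₀ ℤ :=
  ∑ p ∈ s.filter (fun p => Even ((s.filter (fun q => q < p)).card)),
    Finsupp.single (s.erase p) 1

/-- The negative part `∂⁻` of the simplicial boundary: deletions of the `p_i`
with `i` odd. -/
def bndM (s : Finset (Fin (d+1))) : Finset (Fin (d+1)) →₀ ℤ :=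
  ∑ p ∈ s.filter (fun p => Odd ((s.filter (fun q => q < p)).card)),
    Finsupp.single (s.erase p) 1

/-- The boundary operator `∂ = ∂⁺ − ∂⁻`, extended linearly to chains. -/
def bndMap : (Finset (Fin (d+1)) →₀ ℤ) →ₗ[ℤ] (Finset (Fin (d+1)) →₀ ℤ) :=
  Finsupp.lsum ℤ fun s => LinearMap.smulRight (LinearMap.id : ℤ →ₗ[ℤ] ℤ) (bndP s - bndM s)

/-- The augmentation, equal to `1` on each degree-`0` basis element. -/
def augMap : (Finset (Fin (d+1)) →₀ ℤ) →ₗ[ℤ] ℤ :=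
  Finsupp.lsum ℤ fun s => if s.card = 1 then (LinearMap.id : ℤ →ₗ[ℤ] ℤ) else 0

/-- The relation `b <_ℕ b'`: `b` appears in `∂⁻(b')` or `b'` appears in `∂⁺(b)`
(between actual basis elements, i.e. nonempty subsets). -/
def relN (a b : Finset (Fin (d+1))) : Prop :=
  a.Nonempty ∧ b.Nonempty ∧ (a ∈ (bndM b).support ∨ b ∈ (bndP a).support)

namespace Finset

variable {α : Type*} [LinearOrder α]

/-- The index `i` of `p = p_i` in `s = [p₀,…,p_k]`. -/
def rank (s : Finset α) (p : α) : ℕ := #(s.filter (· < p))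

theorem rank_erase_add_one_of_lt {s : Finset α} {p q : α} (hp : p ∈ s) (hpq : p < q) :
    rank (s.erase p) q + 1 = rank s q := by
  rw [rank, rank, filter_erase, card_erase_add_one (mem_filter.2 ⟨hp, hpq⟩)]

theorem rank_erase_of_lt {s : Finset α} {p q : α} (hqp : q < p) :
    rank (s.erase p) q = rank s q := by
  rw [rank, rank, filter_erase, erase_eq_of_notMem (fun h => (mem_filter.1 h).2.asymm hqp)]

theorem neg_one_pow_rank_add_rank_erase_of_lt {s : Finset α} {p q : α} (hp : p ∈ s)
    (hpq : p < q) :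
    (-1 : ℤ) ^ (rank s p + rank (s.erase p) q) =
      -(-1) ^ (rank s q + rank (s.erase q) p) := by
  rw [rank_erase_of_lt hpq, ← rank_erase_add_one_of_lt hp hpq]
  ring

theorem neg_one_pow_rank_add_rank_erase_add_swap {s : Finset α} {p q : α} (hp : p ∈ s)
    (hq : q ∈ s) (hpq : p ≠ q) :
    (-1 : ℤ) ^ (rank s p + rank (s.erase p) q) +
      (-1) ^ (rank s q + rank (s.erase q) p) = 0 := by
  rcases hpq.lt_or_gt with h | h
  · rw [neg_one_pow_rank_add_rank_erase_of_lt hp h, neg_add_cancel]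
  · rw [neg_one_pow_rank_add_rank_erase_of_lt hq h, add_neg_cancel]

theorem sum_sum_erase_eq_zero_of_antisymm {ι M : Type*} [DecidableEq ι] [AddCommMonoid M]
    (s : Finset ι) (F : ι → ι → M) (hF : ∀ p ∈ s, ∀ q ∈ s, p ≠ q → F p q + F q p = 0) :
    ∑ p ∈ s, ∑ q ∈ s.erase p, F p q = 0 := by
  rw [sum_sigma']
  refine sum_involution (fun x _ => ⟨x.2, x.1⟩) ?_ ?_ ?_ ?_
  all_goals simp only [mem_sigma, mem_erase]
  · rintro ⟨p, q⟩ ⟨hp, hqp, hq⟩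
    exact hF p hp q hq hqp.symm
  · rintro ⟨p, q⟩ ⟨_, hqp, _⟩ _ h
    exact hqp (congrArg Sigma.fst h)
  · rintro ⟨p, q⟩ ⟨hp, hqp, hq⟩
    exact ⟨hq, hqp.symm, hp⟩
  · simp

def altSum (s : Finset α) (w : α → ℤ) : ℤ := ∑ p ∈ s, (-1) ^ rank s p * w p

-- Deleting `q` flips the signs of exactly the later terms.
theorem altSum_sub_altSum_erase {s : Finset α} {q : α} (hq : q ∈ s) (w : α → ℤ) :
    altSum s w - altSum (s.erase q) w =
      (-1) ^ rank s q * w q + 2 * ∑ p ∈ s with q < p, (-1) ^ rank s p * w p := by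
  have hterm : ∀ p ∈ s.erase q, (-1) ^ rank s p * w p - (-1) ^ rank (s.erase q) p * w p =
      if q < p then 2 * ((-1) ^ rank s p * w p) else 0 := by
    intro p hp
    rcases (ne_of_mem_erase hp).lt_or_gt with h | h
    · rw [if_neg h.asymm, rank_erase_of_lt h, sub_self]
    · rw [if_pos h, ← rank_erase_add_one_of_lt hq h]
      ring
  rw [altSum, altSum, ← add_sum_erase s _ hq, add_sub_assoc, ← sum_sub_distrib,
    sum_congr rfl hterm, sum_erase s (by simp), ← sum_filter, mul_sum]

end Finset

theorem Finsupp.exists_eq_of_mem_support_sum_single {ι κ : Type*} {S : Finset ι} {g : ι → κ}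
    {a : κ} (h : a ∈ (∑ p ∈ S, Finsupp.single (g p) (1 : ℤ)).support) : ∃ p ∈ S, a = g p := by
  simpa using Finsupp.support_finsetSum h

theorem Relation.ReflTransGen.antisymm_of_lt_comp {α β : Type*} [Preorder β]
    {r : α → α → Prop} (f : α → β) (hf : ∀ a b, r a b → f a < f b) {a b : α}
    (hab : Relation.ReflTransGen r a b) (hba : Relation.ReflTransGen r b a) : a = b := by
  have hlt : ∀ {x y}, Relation.TransGen r x y → f x < f y := fun h => by
    simpa [Relation.transGen_eq_self] using h.lift f hf
  rcases Relation.reflTransGen_iff_eq_or_transGen.1 hab with rfl | hab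
  · rfl
  rcases Relation.reflTransGen_iff_eq_or_transGen.1 hba with rfl | hba
  · rfl
  exact absurd ((hlt hab).trans (hlt hba)) (lt_irrefl _)

open Finset

theorem two_mul_sum_three_pow_lt (q : Fin (d+1)) (t : Finset (Fin (d+1)))
    (ht : ∀ p ∈ t, q < p) :
    2 * ∑ p ∈ t, (3 : ℤ) ^ (d - p) < 3 ^ (d - q) := by
  have hinj : Set.InjOn (fun p : Fin (d+1) => d - (p : ℕ)) t := fun x _ y _ h => by
    have := x.isLt; have := y.isLt; simp only at h; omega
  have hsub : t.image (fun p : Fin (d+1) => d - (p : ℕ)) ⊆ range (d - q) := by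
    intro e he
    obtain ⟨p, hp, rfl⟩ := mem_image.1 he
    have := ht p hp; have := p.isLt
    rw [mem_range]; omega
  calc 2 * ∑ p ∈ t, (3 : ℤ) ^ (d - p)
      = 2 * ∑ e ∈ t.image (fun p : Fin (d+1) => d - (p : ℕ)), (3 : ℤ) ^ e := by
        rw [sum_image hinj]
    _ ≤ 2 * ∑ e ∈ range (d - q), (3 : ℤ) ^ e := by gcongr
    _ = 3 ^ (d - q) - 1 := by linear_combination geom_sum_mul (3 : ℤ) (d - q)
    _ < 3 ^ (d - q) := sub_one_lt _

def altWeight (s : Finset (Fin (d+1))) : ℤ := altSum s fun p => 3 ^ (d - p)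

theorem abs_altWeight_sub_altWeight_erase_sub_lt {s : Finset (Fin (d+1))} {q : Fin (d+1)}
    (hq : q ∈ s) :
    |altWeight s - altWeight (s.erase q) - (-1) ^ rank s q * 3 ^ (d - q)| < 3 ^ (d - q) := by
  rw [altWeight, altWeight, altSum_sub_altSum_erase hq, add_sub_cancel_left, abs_mul,
    abs_two]
  refine lt_of_le_of_lt ?_ (two_mul_sum_three_pow_lt q (s.filter (q < ·))
    fun p hp => (mem_filter.1 hp).2)
  gcongr
  refine (abs_sum_le_sum_abs _ _).trans_eq (sum_congr rfl fun p _ => ?_)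
  simp

theorem bndP_sub_bndM (s : Finset (Fin (d+1))) : bndP s - bndM s =
    ∑ p ∈ s, ((-1 : ℤ) ^ ((s.filter (fun q => q < p)).card)) •
      Finsupp.single (s.erase p) (1 : ℤ) := by
  rw [bndP, bndM, sum_filter, sum_filter, ← sum_sub_distrib]
  refine sum_congr rfl fun p _ => ?_
  rcases Nat.even_or_odd #(s.filter (· < p)) with h | h
  · simp [h, h.neg_one_pow, Nat.not_odd_iff_even.2 h]
  · simp [h, h.neg_one_pow, Nat.not_even_iff_odd.2 h]

theorem bndMap_single (s : Finset (Fin (d+1))) :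
    bndMap (Finsupp.single s (1 : ℤ)) =
      ∑ p ∈ s, (-1 : ℤ) ^ rank s p • Finsupp.single (s.erase p) (1 : ℤ) := by
  rw [bndMap, Finsupp.lsum_single, LinearMap.smulRight_apply, LinearMap.id_apply, one_smul,
    bndP_sub_bndM]
  rfl

theorem bndMap_bndMap_single (s : Finset (Fin (d+1))) :
    bndMap (bndMap (Finsupp.single s (1 : ℤ))) = 0 := by
  simp only [bndMap_single, map_sum, map_smul, smul_sum, smul_smul, ← pow_add]
  refine sum_sum_erase_eq_zero_of_antisymm s _ fun p hp q hq hpq => ?_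
  rw [erase_right_comm, ← add_smul, neg_one_pow_rank_add_rank_erase_add_swap hp hq hpq,
    zero_smul]

theorem bndMap_single_pair {a b : Fin (d+1)} (h : a < b) :
    bndMap (Finsupp.single {a, b} (1 : ℤ)) =
      Finsupp.single {b} 1 - Finsupp.single {a} 1 := by
  have hrank_a : rank {a, b} a = 0 := by simp [rank, filter_insert, filter_singleton, h.asymm]
  have hrank_b : rank {a, b} b = 1 := by simp [rank, filter_insert, filter_singleton, h]
  rw [bndMap_single, sum_pair h.ne, hrank_a, hrank_b, erase_insert (by simpa using h.ne),
    pair_comm, erase_insert (by simpa using h.ne')]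
  simp [sub_eq_add_neg]

theorem augMap_single (s : Finset (Fin (d+1))) (c : ℤ) :
    augMap (Finsupp.single s c) = if #s = 1 then c else 0 := by
  rw [augMap, Finsupp.lsum_single]
  split <;> simp

theorem augMap_bndMap_single (s : Finset (Fin (d+1))) :
    augMap (bndMap (Finsupp.single s (1 : ℤ))) = 0 := by
  by_cases hs : #s = 2
  · obtain ⟨a, b, hab, rfl⟩ := card_eq_two.1 hs
    rcases hab.lt_or_gt with h | h
    · simp [bndMap_single_pair h, augMap_single]
    · simp [pair_comm a b, bndMap_single_pair h, augMap_single]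
  · rw [bndMap_single, map_sum]
    refine sum_eq_zero fun p hp => ?_
    have : #(s.erase p) ≠ 1 := by
      have := card_erase_add_one hp
      omega
    rw [map_smul, augMap_single, if_neg this, smul_zero]

theorem altWeight_lt_of_relN {a b : Finset (Fin (d+1))} (h : relN a b) :
    altWeight b < altWeight a := by
  obtain ⟨-, -, h | h⟩ := h
  · obtain ⟨p, hp, rfl⟩ := Finsupp.exists_eq_of_mem_support_sum_single h
    obtain ⟨hpb, hodd⟩ := mem_filter.1 hp
    have := abs_altWeight_sub_altWeight_erase_sub_lt hpb
    rw [Odd.neg_one_pow (n := rank b p) hodd, abs_lt] at this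
    linarith
  · obtain ⟨p, hp, rfl⟩ := Finsupp.exists_eq_of_mem_support_sum_single h
    obtain ⟨hpa, heven⟩ := mem_filter.1 hp
    have := abs_altWeight_sub_altWeight_erase_sub_lt hpa
    rw [Even.neg_one_pow (n := rank a p) heven, abs_lt] at this
    linarith

theorem stmt14 (d : ℕ) :
    (∀ s : Finset (Fin (d+1)), bndP s - bndM s =
      ∑ p ∈ s, ((-1 : ℤ) ^ ((s.filter (fun q => q < p)).card)) •
        Finsupp.single (s.erase p) (1 : ℤ)) ∧
    (∀ s : Finset (Fin (d+1)), bndMap (bndMap (Finsupp.single s (1 : ℤ))) = 0) ∧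
    (∀ s : Finset (Fin (d+1)), augMap (bndMap (Finsupp.single s (1 : ℤ))) = 0) ∧
    (∀ a b : Finset (Fin (d+1)),
      Relation.ReflTransGen relN a b → Relation.ReflTransGen relN b a → a = b) :=
  ⟨bndP_sub_bndM, bndMap_bndMap_single, augMap_bndMap_single, fun _ _ =>
    Relation.ReflTransGen.antisymm_of_lt_comp (fun s => -altWeight s)
      fun _ _ h => neg_lt_neg (altWeight_lt_of_relN h)⟩

end
end
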